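/- arXiv:1612.05833 — 6 statements merged into one kernel-verified Lean document; each statement's English description precedes it below -/
import Mathlib

section
/- Suppose G is a finite graph on vertex set X, f : X → ℝ, and c is a capacity function for G. Then G has an f-flow bounded by c if and only if for every set F ⊆ X: −∑_{(x,y) edge of G, x ∉ F, y ∈ F} c(x,y) ≤ ∑_{x ∈ F} f(x) ≤ ∑_{(x,y) edge of G, x ∈ F, y ∉ F} c(x,y). -/
/-!
Minimise the energy `∑ₓ e(x)²`, where `e(x) = f x - ∑_{y ~ x} φ x y` is the excess of `φ`,
over the compact set of antisymmetric `φ` bounded by `c` on edges and by `0` off edges.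
Pushing a little more along an unsaturated edge `(a, b)` changes the energy by
`-2ε (e a - e b - ε)`, so at a minimiser the excess cannot decrease along unsaturated edges.
If some `e s > 0`, the set `R` of vertices reachable from `s` through unsaturated edges then has
positive total excess while every edge leaving `R` is saturated, so `∑_R f` exceeds the capacity
leaving `R`. Hence `e ≤ 0`, and `∑ e = ∑ f = 0` forces `e = 0`.
-/

open Finset

/-- An `f`-flow on a locally finite graph `G`: a function on oriented edges, antisymmetric
on edges, whose net outflow at each vertex `x` equals `f x`. -/
def IsFlow {X : Type*} (G : SimpleGraph X) [G.LocallyFinite] (f : X → ℝ)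
    (φ : X → X → ℝ) : Prop :=
  (∀ x y, G.Adj x y → φ x y = -φ y x) ∧
  (∀ x, ∑ y ∈ G.neighborFinset x, φ x y = f x)

section SkewBounded

variable {X : Type*}

def skewBoundedBy (cap : X → X → ℝ) : Set (X → X → ℝ) :=
  {φ | ∀ x y, φ x y = -φ y x ∧ φ x y ≤ cap x y}

lemma zero_mem_skewBoundedBy {cap : X → X → ℝ} (hcap : ∀ x y, 0 ≤ cap x y) :
    0 ∈ skewBoundedBy cap :=
  fun x y => ⟨by simp, hcap x y⟩

lemma isCompact_skewBoundedBy [Finite X] (cap : X → X → ℝ) :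
    IsCompact (skewBoundedBy cap) := by
  have hbox : IsCompact (Set.univ.pi fun x => Set.univ.pi fun y => Set.Icc (-cap y x) (cap x y)) :=
    isCompact_univ_pi fun x => isCompact_univ_pi fun y => isCompact_Icc
  refine hbox.of_isClosed_subset ?_ fun φ hφ => ?_
  · simp only [skewBoundedBy, Set.ofPred_forall, Set.ofPred_and]
    exact isClosed_iInter fun x => isClosed_iInter fun y =>
      (isClosed_eq (by fun_prop) (by fun_prop)).inter (isClosed_le (by fun_prop) (by fun_prop))
  · simp only [Set.mem_univ_pi, Set.mem_Icc]
    intro x y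
    exact ⟨by linarith [hφ x y, hφ y x], (hφ x y).2⟩

variable [DecidableEq X]

def arcFlow (a b : X) (ε : ℝ) : X → X → ℝ :=
  fun x y => (if x = a ∧ y = b then ε else 0) - (if x = b ∧ y = a then ε else 0)

lemma add_arcFlow_mem_skewBoundedBy {cap φ : X → X → ℝ} (hφ : φ ∈ skewBoundedBy cap)
    {a b : X} {ε : ℝ} (hε : 0 ≤ ε) (hab : φ a b + ε ≤ cap a b) :
    φ + arcFlow a b ε ∈ skewBoundedBy cap := by
  intro x y
  refine ⟨?_, ?_⟩
  · simp only [Pi.add_apply, arcFlow, (hφ x y).1, and_comm (a := y = _)]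
    ring
  · have := (hφ x y).2
    simp only [Pi.add_apply, arcFlow]
    split_ifs with h1 <;> (try obtain ⟨rfl, rfl⟩ := h1) <;> linarith

lemma sum_sq_sub_ite_add_ite [Fintype X] {a b : X} (hab : a ≠ b) (e : X → ℝ) (ε : ℝ) :
    ∑ v, (e v - (if v = a then ε else 0) + (if v = b then ε else 0)) ^ 2 =
      ∑ v, e v ^ 2 - 2 * ε * (e a - e b - ε) := by
  have hterm : ∀ v, (e v - (if v = a then ε else 0) + (if v = b then ε else 0)) ^ 2 =
      e v ^ 2 + (if v = a then ε ^ 2 - 2 * ε * e a else 0) +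
        (if v = b then ε ^ 2 + 2 * ε * e b else 0) := by
    intro v
    by_cases hva : v = a <;> by_cases hvb : v = b <;> simp_all <;> ring
  simp only [hterm, sum_add_distrib, sum_ite_eq', mem_univ, if_true]
  ring

end SkewBounded

namespace SimpleGraph

variable {X : Type*} [Fintype X] (G : SimpleGraph X) [DecidableRel G.Adj]

def excess (f : X → ℝ) (φ : X → X → ℝ) (x : X) : ℝ :=
  f x - ∑ y ∈ G.neighborFinset x, φ x y

def excessEnergy (f : X → ℝ) (φ : X → X → ℝ) : ℝ :=
  ∑ x, G.excess f φ x ^ 2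

lemma continuous_excessEnergy (f : X → ℝ) : Continuous (G.excessEnergy f) := by
  unfold excessEnergy excess
  fun_prop

variable [DecidableEq X]

def edgesLeaving (F : Finset X) : Finset (X × X) :=
  (univ ×ˢ univ).filter fun p => G.Adj p.1 p.2 ∧ p.1 ∈ F ∧ p.2 ∉ F

def edgesEntering (F : Finset X) : Finset (X × X) :=
  (univ ×ˢ univ).filter fun p => G.Adj p.1 p.2 ∧ p.1 ∉ F ∧ p.2 ∈ F

@[simp] lemma edgesLeaving_univ : G.edgesLeaving univ = ∅ := by
  ext; simp [edgesLeaving]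

@[simp] lemma edgesEntering_univ : G.edgesEntering univ = ∅ := by
  ext; simp [edgesEntering]

lemma edgesLeaving_compl (F : Finset X) : G.edgesLeaving Fᶜ = G.edgesEntering F := by
  ext; simp [edgesLeaving, edgesEntering]

variable {G}

lemma sum_edgesLeaving (g : X → X → ℝ) (F : Finset X) :
    ∑ p ∈ G.edgesLeaving F, g p.1 p.2 = ∑ x ∈ F, ∑ y ∈ G.neighborFinset x with y ∉ F, g x y :=
  sum_finset_product _ _ _ fun p => by simp [edgesLeaving, and_left_comm]

lemma sum_sum_neighborFinset_mem_eq_zero {φ : X → X → ℝ}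
    (hφ : ∀ x y, G.Adj x y → φ x y = -φ y x) (F : Finset X) :
    ∑ x ∈ F, ∑ y ∈ G.neighborFinset x with y ∈ F, φ x y = 0 := by
  have hswap : ∑ x ∈ F, ∑ y ∈ G.neighborFinset x with y ∈ F, φ x y =
      ∑ y ∈ F, ∑ x ∈ G.neighborFinset y with x ∈ F, φ x y :=
    sum_comm' fun x y => by simp [adj_comm]; tauto
  have hneg : ∑ y ∈ F, ∑ x ∈ G.neighborFinset y with x ∈ F, φ x y =
      -∑ y ∈ F, ∑ x ∈ G.neighborFinset y with x ∈ F, φ y x := by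
    simp only [← sum_neg_distrib]
    refine sum_congr rfl fun y _ => sum_congr rfl fun x hx => ?_
    exact hφ x y ((G.mem_neighborFinset y x).1 (mem_filter.1 hx).1).symm
  linarith

lemma sum_outflow_eq_sum_edgesLeaving {φ : X → X → ℝ}
    (hφ : ∀ x y, G.Adj x y → φ x y = -φ y x) (F : Finset X) :
    ∑ x ∈ F, ∑ y ∈ G.neighborFinset x, φ x y = ∑ p ∈ G.edgesLeaving F, φ p.1 p.2 := by
  simp only [← sum_filter_add_sum_filter_not (G.neighborFinset _) (· ∈ F), sum_add_distrib,
    sum_sum_neighborFinset_mem_eq_zero hφ, zero_add, sum_edgesLeaving]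

lemma cut_condition_iff (f : X → ℝ) (c : X → X → ℝ) :
    (∀ F : Finset X, -(∑ p ∈ G.edgesEntering F, c p.1 p.2) ≤ ∑ x ∈ F, f x ∧
      ∑ x ∈ F, f x ≤ ∑ p ∈ G.edgesLeaving F, c p.1 p.2) ↔
    ∑ x, f x = 0 ∧ ∀ F : Finset X, ∑ x ∈ F, f x ≤ ∑ p ∈ G.edgesLeaving F, c p.1 p.2 := by
  refine ⟨fun h => ⟨?_, fun F => (h F).2⟩, fun ⟨hsum, hcut⟩ F => ⟨?_, hcut F⟩⟩
  · have := h univ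
    simp only [edgesLeaving_univ, edgesEntering_univ, sum_empty, neg_zero] at this
    exact le_antisymm this.2 this.1
  · have hcompl := hcut Fᶜ
    rw [edgesLeaving_compl] at hcompl
    linarith [sum_add_sum_compl F f]

lemma _root_.IsFlow.sum_eq_sum_edgesLeaving {f : X → ℝ} {φ : X → X → ℝ} (hφ : IsFlow G f φ)
    (F : Finset X) : ∑ x ∈ F, f x = ∑ p ∈ G.edgesLeaving F, φ p.1 p.2 := by
  rw [← sum_outflow_eq_sum_edgesLeaving hφ.1]
  exact sum_congr rfl fun x _ => (hφ.2 x).symm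

variable {f : X → ℝ} {φ : X → X → ℝ}

lemma sum_excess (hφ : ∀ x y, G.Adj x y → φ x y = -φ y x) :
    ∑ x, G.excess f φ x = ∑ x, f x := by
  simp [excess, sum_sub_distrib, sum_outflow_eq_sum_edgesLeaving hφ univ]

lemma excess_add_arcFlow {a b : X} (hab : G.Adj a b) (ε : ℝ) (v : X) :
    G.excess f (φ + arcFlow a b ε) v =
      G.excess f φ v - (if v = a then ε else 0) + (if v = b then ε else 0) := by
  have hba : G.Adj b a := hab.symm
  simp only [excess, arcFlow, Pi.add_apply, sum_add_distrib, sum_sub_distrib, ite_and]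
  split_ifs <;> simp_all <;> ring

lemma excessEnergy_add_arcFlow {a b : X} (hab : G.Adj a b) (ε : ℝ) :
    G.excessEnergy f (φ + arcFlow a b ε) =
      G.excessEnergy f φ - 2 * ε * (G.excess f φ a - G.excess f φ b - ε) := by
  simp only [excessEnergy, excess_add_arcFlow hab, sum_sq_sub_ite_add_ite hab.ne]

lemma excess_le_of_isMinOn {cap : X → X → ℝ} (hφ : φ ∈ skewBoundedBy cap)
    (hmin : IsMinOn (G.excessEnergy f) (skewBoundedBy cap) φ) {a b : X} (hab : G.Adj a b)
    (hres : φ a b < cap a b) : G.excess f φ a ≤ G.excess f φ b := by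
  by_contra! hlt
  set ε := min (cap a b - φ a b) ((G.excess f φ a - G.excess f φ b) / 2)
  have hε : 0 < ε := lt_min (by linarith) (by linarith)
  have hψ : φ + arcFlow a b ε ∈ skewBoundedBy cap :=
    add_arcFlow_mem_skewBoundedBy hφ hε.le (by linarith [min_le_left (cap a b - φ a b) ((G.excess f φ a - G.excess f φ b) / 2)])
  have hle := isMinOn_iff.1 hmin _ hψ
  rw [excessEnergy_add_arcFlow hab] at hle
  have : ε ≤ (G.excess f φ a - G.excess f φ b) / 2 := min_le_right _ _
  nlinarith

lemma excess_nonpos_of_isMinOn {c : X → X → ℝ}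
    (hcut : ∀ F : Finset X, ∑ x ∈ F, f x ≤ ∑ p ∈ G.edgesLeaving F, c p.1 p.2)
    (hφ : φ ∈ skewBoundedBy fun x y => if G.Adj x y then c x y else 0)
    (hmin : IsMinOn (G.excessEnergy f) (skewBoundedBy fun x y => if G.Adj x y then c x y else 0) φ)
    (s : X) : G.excess f φ s ≤ 0 := by
  classical
  by_contra! hs
  let residual (a b : X) : Prop := G.Adj a b ∧ φ a b < c a b
  let R : Finset X := {t | Relation.ReflTransGen residual s t}
  have hmono : ∀ t, Relation.ReflTransGen residual s t → G.excess f φ s ≤ G.excess f φ t := by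
    intro t ht
    induction ht with
    | refl => exact le_rfl
    | tail _ hab ih =>
      refine ih.trans (excess_le_of_isMinOn hφ hmin hab.1 ?_)
      simpa [if_pos hab.1] using hab.2
  have hsat : ∀ p ∈ G.edgesLeaving R, φ p.1 p.2 = c p.1 p.2 := by
    intro p hp
    obtain ⟨hadj, hp₁, hp₂⟩ := (mem_filter.1 hp).2
    have hle : φ p.1 p.2 ≤ c p.1 p.2 := by simpa [if_pos hadj] using (hφ p.1 p.2).2
    refine le_antisymm hle (not_lt.1 fun hlt => hp₂ ?_)
    exact mem_filter.2 ⟨mem_univ _, (mem_filter.1 hp₁).2.tail ⟨hadj, hlt⟩⟩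
  have hpos : 0 < ∑ t ∈ R, G.excess f φ t :=
    sum_pos (fun t ht => hs.trans_le (hmono t (mem_filter.1 ht).2)) ⟨s, mem_filter.2 ⟨mem_univ _, .refl⟩⟩
  have hbalance : ∑ x ∈ R, f x = ∑ x ∈ R, G.excess f φ x + ∑ p ∈ G.edgesLeaving R, c p.1 p.2 := by
    rw [← sum_congr rfl hsat, ← sum_outflow_eq_sum_edgesLeaving fun x y _ => (hφ x y).1,
      ← sum_add_distrib]
    simp [excess]
  linarith [hcut R]

lemma exists_flow_of_cut_condition {c : X → X → ℝ} (hc : ∀ x y, G.Adj x y → 0 ≤ c x y)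
    (hsum : ∑ x, f x = 0)
    (hcut : ∀ F : Finset X, ∑ x ∈ F, f x ≤ ∑ p ∈ G.edgesLeaving F, c p.1 p.2) :
    ∃ φ, IsFlow G f φ ∧ ∀ x y, G.Adj x y → φ x y ≤ c x y := by
  set cap : X → X → ℝ := fun x y => if G.Adj x y then c x y else 0
  have hcap : ∀ x y, 0 ≤ cap x y := fun x y => by
    by_cases hxy : G.Adj x y <;> simp [cap, hxy, hc x y]
  obtain ⟨φ, hφ, hmin⟩ := (isCompact_skewBoundedBy cap).exists_isMinOn
    ⟨0, zero_mem_skewBoundedBy hcap⟩ (G.continuous_excessEnergy f).continuousOn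
  have hskew : ∀ x y, G.Adj x y → φ x y = -φ y x := fun x y _ => (hφ x y).1
  have hzero : ∀ x ∈ univ, G.excess f φ x = 0 :=
    (sum_eq_zero_iff_of_nonpos fun x _ => excess_nonpos_of_isMinOn hcut hφ hmin x).1
      (by rw [sum_excess hskew, hsum])
  exact ⟨φ, ⟨hskew, fun x => (sub_eq_zero.1 (hzero x (mem_univ x))).symm⟩,
    fun x y hxy => by simpa [cap, hxy] using (hφ x y).2⟩

end SimpleGraph

/-- **Existence of flows in finite graphs.** A finite graph `G` has an `f`-flow bounded by
a capacity function `c` iff for every set `F` of vertices, `∑_{x ∈ F} f x` is between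
`−∑ c(x,y)` over edges entering `F` and `∑ c(x,y)` over edges leaving `F`. -/
theorem finite_flow_existence {X : Type*} [Fintype X] [DecidableEq X]
    (G : SimpleGraph X) [DecidableRel G.Adj]
    (f : X → ℝ) (c : X → X → ℝ) (hc : ∀ x y, G.Adj x y → 0 ≤ c x y) :
    (∃ φ : X → X → ℝ, IsFlow G f φ ∧ ∀ x y, G.Adj x y → φ x y ≤ c x y) ↔
    (∀ F : Finset X,
      -(∑ p ∈ (Finset.univ ×ˢ Finset.univ).filter
          (fun p : X × X => G.Adj p.1 p.2 ∧ p.1 ∉ F ∧ p.2 ∈ F), c p.1 p.2)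
        ≤ ∑ x ∈ F, f x ∧
      ∑ x ∈ F, f x ≤
        ∑ p ∈ (Finset.univ ×ˢ Finset.univ).filter
          (fun p : X × X => G.Adj p.1 p.2 ∧ p.1 ∈ F ∧ p.2 ∉ F), c p.1 p.2) := by
  refine Iff.trans ?_ (G.cut_condition_iff f c).symm
  constructor
  · rintro ⟨φ, hφ, hφc⟩
    refine ⟨by simpa using hφ.sum_eq_sum_edgesLeaving univ, fun F => ?_⟩
    rw [hφ.sum_eq_sum_edgesLeaving F]
    exact sum_le_sum fun p hp => hφc p.1 p.2 (mem_filter.1 hp).2.1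
  · rintro ⟨hsum, hcut⟩
    exact SimpleGraph.exists_flow_of_cut_condition hc hsum hcut
end

section
/- Suppose G is a locally finite graph on vertex set X, f : X → ℝ, and c is a capacity function for G with c(x,y) < ∞ for every edge (x,y). Then G has an f-flow bounded by c if and only if for every finite set F ⊆ X: −∑_{(x,y) edge of G, x ∉ F, y ∈ F} c(x,y) ≤ ∑_{x ∈ F} f(x) ≤ ∑_{(x,y) edge of G, x ∈ F, y ∉ F} c(x,y). -/
/-!
Necessity: summing the conservation law over `F`, the flow on edges inside `F` cancels by
antisymmetry, so `∑_{x ∈ F} f x` is the net flow leaving `F`, which the capacities of the edges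
leaving and entering `F` bound from above and below.

Sufficiency: the antisymmetric functions bounded by `c` form a compact convex set (Tychonoff), so
it suffices to satisfy conservation on each finite `F`. If that fails, Hahn–Banach separates `f`
from the net outflows on `F` by potentials `π` supported on `F`. The flow saturating every edge
downhill in `π` has pairing `∑ (π x - π y)⁺ c x y` with `π`; splitting `π` into its positive and
negative parts and peeling off level sets writes this as a nonnegative combination of cut
capacities, and the cut conditions bound it below by `∑ π f`, a contradiction. The lower cut
condition for `(f, c)` is the upper one for `(-f, cᵀ)`, so only the upper one is ever handled.
-/

open Finset

theorem IsFlow.neg {X : Type*} {G : SimpleGraph X} [G.LocallyFinite] {f : X → ℝ}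
    {φ : X → X → ℝ} (hφ : IsFlow G f φ) : IsFlow G (fun x => -f x) (fun x y => -φ x y) :=
  ⟨fun x y h => by simp only [hφ.1 x y h, neg_neg], fun x => by rw [sum_neg_distrib, hφ.2 x]⟩

namespace SimpleGraph

section Sums

variable {X : Type*} [DecidableEq X] (G : SimpleGraph X) [G.LocallyFinite]

def edgeSum (T : Finset X) (g : X → X → ℝ) : ℝ :=
  ∑ x ∈ T, ∑ y ∈ G.neighborFinset x ∩ T, g x y

def cutCapacity (c : X → X → ℝ) (A : Finset X) : ℝ :=
  ∑ x ∈ A, ∑ y ∈ (G.neighborFinset x).filter (· ∉ A), c x y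

variable {G} {T : Finset X} {g h : X → X → ℝ}

theorem edgeSum_congr (hgh : ∀ x y, G.Adj x y → g x y = h x y) :
    G.edgeSum T g = G.edgeSum T h :=
  sum_congr rfl fun x _ => sum_congr rfl fun y hy =>
    hgh x y ((G.mem_neighborFinset x y).1 (mem_inter.1 hy).1)

theorem edgeSum_add :
    G.edgeSum T (fun x y => g x y + h x y) = G.edgeSum T g + G.edgeSum T h := by
  simp only [edgeSum, sum_add_distrib]

theorem edgeSum_sub :
    G.edgeSum T (fun x y => g x y - h x y) = G.edgeSum T g - G.edgeSum T h := by
  simp only [edgeSum, sum_sub_distrib]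

theorem edgeSum_neg : G.edgeSum T (fun x y => -g x y) = -G.edgeSum T g := by
  simp only [edgeSum, sum_neg_distrib]

theorem edgeSum_const_mul (m : ℝ) :
    G.edgeSum T (fun x y => m * g x y) = m * G.edgeSum T g := by
  simp only [edgeSum, mul_sum]

theorem edgeSum_swap : G.edgeSum T (fun x y => g y x) = G.edgeSum T g :=
  sum_comm' fun x y => by simp only [mem_inter, mem_neighborFinset, G.adj_comm]; tauto

theorem edgeSum_eq_zero_of_antisymm (hg : ∀ x y, G.Adj x y → g x y = -g y x) :
    G.edgeSum T g = 0 := by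
  have h := (edgeSum_congr (T := T) hg).trans (edgeSum_neg.trans (congrArg _ edgeSum_swap))
  linarith

theorem edgeSum_eq_sum_neighborFinset {A : Finset X} (hAT : A ⊆ T)
    (hNT : ∀ x ∈ A, G.neighborFinset x ⊆ T) (hg : ∀ x ∉ A, ∀ y, g x y = 0) :
    G.edgeSum T g = ∑ x ∈ A, ∑ y ∈ G.neighborFinset x, g x y := by
  rw [edgeSum, ← sum_subset hAT fun x _ hx => sum_eq_zero fun y _ => hg x hx y]
  exact sum_congr rfl fun x hx => by rw [inter_eq_left.2 (hNT x hx)]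

theorem cutCapacity_eq_edgeSum (c : X → X → ℝ) {A : Finset X} (hAT : A ⊆ T)
    (hNT : ∀ x ∈ A, G.neighborFinset x ⊆ T) :
    G.cutCapacity c A = G.edgeSum T (fun x y => if x ∈ A ∧ y ∉ A then c x y else 0) := by
  rw [edgeSum_eq_sum_neighborFinset hAT hNT fun x hx y => if_neg fun h => hx h.1, cutCapacity]
  exact sum_congr rfl fun x hx => by simp only [hx, true_and, sum_filter]

theorem cutCapacity_mono {c d : X → X → ℝ} (hcd : ∀ x y, G.Adj x y → c x y ≤ d x y)
    (A : Finset X) : G.cutCapacity c A ≤ G.cutCapacity d A :=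
  sum_le_sum fun x _ => sum_le_sum fun y hy =>
    hcd x y ((G.mem_neighborFinset x y).1 (mem_filter.1 hy).1)

end Sums

end SimpleGraph

section Necessity

variable {X : Type*} [DecidableEq X] {G : SimpleGraph X} [G.LocallyFinite] {f : X → ℝ}
  {φ : X → X → ℝ}

theorem IsFlow.sum_eq_cutCapacity (hφ : IsFlow G f φ) (F : Finset X) :
    ∑ x ∈ F, f x = G.cutCapacity φ F := by
  have hsplit : ∀ x ∈ F, f x = ∑ y ∈ G.neighborFinset x ∩ F, φ x y
      + ∑ y ∈ (G.neighborFinset x).filter (· ∉ F), φ x y := fun x _ => by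
    rw [← hφ.2 x, ← filter_mem_eq_inter, sum_filter_add_sum_filter_not]
  rw [sum_congr rfl hsplit, sum_add_distrib, ← SimpleGraph.edgeSum,
    SimpleGraph.edgeSum_eq_zero_of_antisymm hφ.1, zero_add, SimpleGraph.cutCapacity]

theorem IsFlow.sum_le_cutCapacity (hφ : IsFlow G f φ) {c : X → X → ℝ}
    (hφc : ∀ x y, G.Adj x y → φ x y ≤ c x y) (F : Finset X) :
    ∑ x ∈ F, f x ≤ G.cutCapacity c F :=
  (hφ.sum_eq_cutCapacity F).trans_le (SimpleGraph.cutCapacity_mono hφc F)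

end Necessity

noncomputable def greedyFlow {X : Type*} (c : X → X → ℝ) (π : X → ℝ) (x y : X) : ℝ :=
  if π y < π x then c x y else if π x < π y then -c y x else 0

section greedyFlow

variable {X : Type*} {c : X → X → ℝ} {π : X → ℝ}

theorem greedyFlow_antisymm (x y : X) : greedyFlow c π x y = -greedyFlow c π y x := by
  unfold greedyFlow
  rcases lt_trichotomy (π x) (π y) with h | h | h
  · simp [h, h.not_gt]
  · simp [h]
  · simp [h, h.not_gt]

theorem greedyFlow_mem_Icc (hc : ∀ x y, 0 ≤ c x y) :
    greedyFlow c π ∈ Set.Icc (fun x y => -c y x) c := by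
  refine ⟨fun x y => ?_, fun x y => ?_⟩ <;> dsimp only <;> unfold greedyFlow <;> split_ifs <;>
    linarith [hc x y, hc y x]

theorem sub_mul_greedyFlow (x y : X) :
    (π x - π y) * greedyFlow c π x y = max (π x - π y) 0 * c x y + max (π y - π x) 0 * c y x := by
  unfold greedyFlow
  rcases lt_trichotomy (π x) (π y) with h | h | h
  · rw [if_neg h.not_gt, if_pos h, max_eq_right (by linarith), max_eq_left (by linarith)]
    ring
  · simp [h]
  · rw [if_pos h, max_eq_left (by linarith), max_eq_right (by linarith)]
    ring

end greedyFlow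

namespace SimpleGraph

section Duality

variable {X : Type*} [DecidableEq X] {G : SimpleGraph X} [G.LocallyFinite] {T : Finset X}

theorem edgeSum_max_sub_eq_cutCapacity_add (c : X → X → ℝ) {A : Finset X} (hAT : A ⊆ T)
    (hNT : ∀ x ∈ A, G.neighborFinset x ⊆ T) {ρ : X → ℝ} {m : ℝ} (hm : 0 ≤ m)
    (hmρ : ∀ x ∈ A, m ≤ ρ x) (hρA : ∀ x ∉ A, ρ x = 0) :
    G.edgeSum T (fun x y => max (ρ x - ρ y) 0 * c x y)
      = m * G.cutCapacity c A + G.edgeSum T (fun x y =>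
          max ((ρ x - if x ∈ A then m else 0) - (ρ y - if y ∈ A then m else 0)) 0 * c x y) := by
  rw [cutCapacity_eq_edgeSum c hAT hNT, ← edgeSum_const_mul, ← edgeSum_add]
  refine edgeSum_congr fun x y _ => ?_
  by_cases hx : x ∈ A <;> by_cases hy : y ∈ A
  · simp [hx, hy]
  · have := hmρ x hx
    rw [if_pos hx, if_neg hy, if_pos ⟨hx, hy⟩, hρA y hy, max_eq_left (by linarith),
      max_eq_left (by linarith)]
    ring
  · have := hmρ y hy
    rw [if_neg hx, if_pos hy, if_neg fun h => hx h.1, hρA x hx, max_eq_right (by linarith),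
      max_eq_right (by linarith)]
    ring
  · simp [hx, hy, hρA x hx, hρA y hy]

theorem sum_mul_le_edgeSum_of_nonneg {f : X → ℝ} {c : X → X → ℝ}
    (hcut : ∀ A : Finset X, ∑ x ∈ A, f x ≤ G.cutCapacity c A) (F : Finset X)
    (hFT : F ⊆ T) (hNT : ∀ x ∈ F, G.neighborFinset x ⊆ T) {ρ : X → ℝ} (hρ : 0 ≤ ρ)
    (hρF : ∀ x ∉ F, ρ x = 0) :
    ∑ x ∈ F, ρ x * f x ≤ G.edgeSum T (fun x y => max (ρ x - ρ y) 0 * c x y) := by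
  induction F using Finset.strongInduction generalizing ρ with
  | H F ih =>
  set A := F.filter (fun x => 0 < ρ x)
  have hAF : A ⊆ F := filter_subset _ _
  have hρA : ∀ x ∉ A, ρ x = 0 := fun x hx => by
    by_cases hxF : x ∈ F
    · exact le_antisymm (not_lt.1 fun h => hx (mem_filter.2 ⟨hxF, h⟩)) (hρ x)
    · exact hρF x hxF
  obtain hA | hA := A.eq_empty_or_nonempty
  · simp only [hA, notMem_empty, not_false_eq_true, forall_const] at hρA
    simp [hρA, edgeSum]
  -- `ρ = m • 1_A + ρ'` with `m` the least positive value of `ρ`, attained at `x₀`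
  obtain ⟨x₀, hx₀A, hmin⟩ := A.exists_min_image ρ hA
  set m := ρ x₀
  have hm : 0 < m := (mem_filter.1 hx₀A).2
  set ρ' : X → ℝ := fun x => ρ x - if x ∈ A then m else 0
  have hρ' : 0 ≤ ρ' := fun x => by
    by_cases hx : x ∈ A
    · simpa [ρ', hx] using hmin x hx
    · simp [ρ', hx, hρA x hx]
  have hρ'F : ∀ x ∉ F.erase x₀, ρ' x = 0 := fun x hx => by
    by_cases hx₀ : x = x₀
    · simp [ρ', hx₀, hx₀A, m]
    · have hxA : x ∉ A := fun h => hx (mem_erase.2 ⟨hx₀, hAF h⟩)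
      simp [ρ', hxA, hρA x hxA]
  have hL : ∑ x ∈ F, ρ x * f x = m * ∑ x ∈ A, f x + ∑ x ∈ F.erase x₀, ρ' x * f x := by
    rw [sum_erase _ (by simp [hρ'F x₀ (notMem_erase x₀ F)]), mul_sum, sum_filter,
      ← sum_add_distrib]
    refine sum_congr rfl fun x hx => ?_
    simp only [ρ', A, mem_filter, hx, true_and]
    split_ifs <;> ring
  rw [hL, edgeSum_max_sub_eq_cutCapacity_add c (hAF.trans hFT) (fun x hx => hNT x (hAF hx))
    hm.le hmin hρA]
  exact add_le_add (mul_le_mul_of_nonneg_left (hcut A) hm.le)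
    (ih _ (erase_ssubset (hAF hx₀A)) ((erase_subset _ _).trans hFT)
      (fun x hx => hNT x (mem_of_mem_erase hx)) hρ' hρ'F)

theorem two_mul_sum_mul_eq_edgeSum {F : Finset X} (hFT : F ⊆ T)
    (hNT : ∀ x ∈ F, G.neighborFinset x ⊆ T) {π : X → ℝ} (hπ : ∀ x ∉ F, π x = 0)
    {φ : X → X → ℝ} (hφ : ∀ x y, G.Adj x y → φ x y = -φ y x) :
    2 * ∑ x ∈ F, π x * ∑ y ∈ G.neighborFinset x, φ x y
      = G.edgeSum T (fun x y => (π x - π y) * φ x y) := by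
  have h : G.edgeSum T (fun x y => π x * φ x y)
      = ∑ x ∈ F, π x * ∑ y ∈ G.neighborFinset x, φ x y := by
    rw [edgeSum_eq_sum_neighborFinset hFT hNT fun x hx y => by rw [hπ x hx, zero_mul]]
    simp only [mul_sum]
  have hswap : G.edgeSum T (fun x y => π y * φ x y)
      = -G.edgeSum T (fun x y => π x * φ x y) := by
    rw [← edgeSum_neg, ← edgeSum_swap]
    exact edgeSum_congr fun x y hxy => by rw [hφ x y hxy]; ring
  simp only [sub_mul]
  rw [edgeSum_sub, hswap, h]
  ring

theorem sum_mul_greedyFlow_eq_edgeSum (c : X → X → ℝ) {F : Finset X} (hFT : F ⊆ T)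
    (hNT : ∀ x ∈ F, G.neighborFinset x ⊆ T) {π : X → ℝ} (hπ : ∀ x ∉ F, π x = 0) :
    ∑ x ∈ F, π x * ∑ y ∈ G.neighborFinset x, greedyFlow c π x y
      = G.edgeSum T (fun x y => max (π x - π y) 0 * c x y) := by
  have h := two_mul_sum_mul_eq_edgeSum (φ := greedyFlow c π) hFT hNT hπ fun x y _ =>
    greedyFlow_antisymm x y
  simp only [sub_mul_greedyFlow] at h
  rw [edgeSum_add, edgeSum_swap (g := fun x y => max (π x - π y) 0 * c x y)] at h
  linarith

theorem edgeSum_max_sub_eq (c : X → X → ℝ) (π : X → ℝ) :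
    G.edgeSum T (fun x y => max (π x - π y) 0 * c x y)
      = G.edgeSum T (fun x y => max (max (π x) 0 - max (π y) 0) 0 * c x y)
        + G.edgeSum T (fun x y => max (max (-π x) 0 - max (-π y) 0) 0 * c y x) := by
  rw [← edgeSum_swap (g := fun x y => max (max (-π x) 0 - max (-π y) 0) 0 * c y x),
    ← edgeSum_add]
  refine edgeSum_congr fun x y _ => ?_
  rw [← add_mul]
  congr 1
  simp only [max_def]
  split_ifs <;> linarith

theorem sum_mul_le_sum_mul_greedyFlow {f : X → ℝ} {c : X → X → ℝ}
    (hout : ∀ A, ∑ x ∈ A, f x ≤ G.cutCapacity c A)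
    (hin : ∀ A, ∑ x ∈ A, -f x ≤ G.cutCapacity (fun x y => c y x) A)
    {F : Finset X} {π : X → ℝ} (hπ : ∀ x ∉ F, π x = 0) :
    ∑ x ∈ F, π x * f x ≤ ∑ x ∈ F, π x * ∑ y ∈ G.neighborFinset x, greedyFlow c π x y := by
  set T := F ∪ F.biUnion fun x => G.neighborFinset x
  have hFT : F ⊆ T := subset_union_left
  have hNT : ∀ x ∈ F, G.neighborFinset x ⊆ T := fun x hx =>
    (subset_biUnion_of_mem (fun x => G.neighborFinset x) hx).trans subset_union_right
  have hpos := sum_mul_le_edgeSum_of_nonneg hout F hFT hNT (ρ := fun x => max (π x) 0)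
    (fun x => le_max_right _ _) fun x hx => by simp [hπ x hx]
  have hneg := sum_mul_le_edgeSum_of_nonneg hin F hFT hNT (ρ := fun x => max (-π x) 0)
    (fun x => le_max_right _ _) fun x hx => by simp [hπ x hx]
  rw [sum_mul_greedyFlow_eq_edgeSum c hFT hNT hπ, edgeSum_max_sub_eq]
  calc ∑ x ∈ F, π x * f x
      = ∑ x ∈ F, max (π x) 0 * f x + ∑ x ∈ F, max (-π x) 0 * -f x := by
        rw [← sum_add_distrib]
        refine sum_congr rfl fun x _ => ?_
        linear_combination -f x * max_zero_sub_max_neg_zero_eq_self (π x)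
    _ ≤ _ := add_le_add hpos hneg

end Duality

section Compactness

variable {X : Type*} (G : SimpleGraph X)

def flowBox (c : X → X → ℝ) : Set (X → X → ℝ) :=
  Set.Icc (fun x y => -c y x) c ∩ {φ | ∀ x y, G.Adj x y → φ x y = -φ y x}

theorem isCompact_flowBox (c : X → X → ℝ) : IsCompact (G.flowBox c) := by
  refine isCompact_Icc.inter_right ?_
  simp only [Set.ofPred_forall]
  exact isClosed_iInter fun x => isClosed_iInter fun y => isClosed_iInter fun _ =>
    isClosed_eq (by fun_prop) (by fun_prop)

theorem convex_flowBox (c : X → X → ℝ) : Convex ℝ (G.flowBox c) := by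
  refine (convex_Icc _ _).inter fun φ hφ ψ hψ a b _ _ _ x y hxy => ?_
  simp only [Pi.add_apply, Pi.smul_apply, smul_eq_mul, hφ x y hxy, hψ x y hxy]
  ring

variable [DecidableEq X] {G} [G.LocallyFinite] {f : X → ℝ} {c : X → X → ℝ}

theorem exists_mem_flowBox_sum_eq (hc : ∀ x y, 0 ≤ c x y)
    (hout : ∀ A, ∑ x ∈ A, f x ≤ G.cutCapacity c A)
    (hin : ∀ A, ∑ x ∈ A, -f x ≤ G.cutCapacity (fun x y => c y x) A) (F : Finset X) :
    ∃ φ ∈ G.flowBox c, ∀ x ∈ F, ∑ y ∈ G.neighborFinset x, φ x y = f x := by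
  let net : (X → X → ℝ) →ₗ[ℝ] (F → ℝ) :=
    { toFun := fun φ x => ∑ y ∈ G.neighborFinset x, φ x y
      map_add' := fun φ ψ => by ext; simp [sum_add_distrib]
      map_smul' := fun a φ => by ext; simp [mul_sum] }
  have hnet : Continuous net := continuous_pi fun x =>
    show Continuous fun φ : X → X → ℝ => ∑ y ∈ G.neighborFinset x, φ x y by fun_prop
  by_contra! hF
  have hf : (fun x : F => f x) ∉ net '' G.flowBox c := by
    rintro ⟨φ, hφ, h⟩
    obtain ⟨x, hx, hne⟩ := hF φ hφ
    exact hne (congrFun h ⟨x, hx⟩)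
  obtain ⟨g, u, hgK, hgf⟩ := geometric_hahn_banach_closed_point
    ((G.convex_flowBox c).linear_image net) ((G.isCompact_flowBox c).image hnet).isClosed hf
  set π : X → ℝ := fun x => if h : x ∈ F then g (fun j => if ⟨x, h⟩ = j then 1 else 0) else 0
  have hg : ∀ v : F → ℝ, g v = ∑ x ∈ F.attach, π x * v x := fun v => by
    rw [← univ_eq_attach, ← g.coe_coe, LinearMap.pi_apply_eq_sum_univ]
    simp [π, mul_comm]
  have hgreedy := hgK _ ⟨greedyFlow c π,
    ⟨greedyFlow_mem_Icc hc, fun x y _ => greedyFlow_antisymm x y⟩, rfl⟩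
  change g (fun x : F => ∑ y ∈ G.neighborFinset x, greedyFlow c π x y) < u at hgreedy
  rw [hg, sum_attach F fun x => π x * ∑ y ∈ G.neighborFinset x, greedyFlow c π x y] at hgreedy
  rw [hg, sum_attach F fun x => π x * f x] at hgf
  linarith [sum_mul_le_sum_mul_greedyFlow hout hin (F := F) (π := π) fun x hx => dif_neg hx]

theorem exists_isFlow_le_of_cutCapacity (hc : ∀ x y, 0 ≤ c x y)
    (hout : ∀ A, ∑ x ∈ A, f x ≤ G.cutCapacity c A)
    (hin : ∀ A, ∑ x ∈ A, -f x ≤ G.cutCapacity (fun x y => c y x) A) :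
    ∃ φ, IsFlow G f φ ∧ ∀ x y, φ x y ≤ c x y := by
  obtain ⟨φ, ⟨hφc, hφ⟩, hsum⟩ := (G.isCompact_flowBox c).inter_iInter_nonempty
    (fun x => {φ | ∑ y ∈ G.neighborFinset x, φ x y = f x})
    (fun x => isClosed_eq (by fun_prop) continuous_const) fun F => by
      obtain ⟨φ, hφ, hF⟩ := exists_mem_flowBox_sum_eq hc hout hin F
      exact ⟨φ, hφ, Set.mem_iInter₂.2 hF⟩
  exact ⟨φ, ⟨hφ, Set.mem_iInter.1 hsum⟩, hφc.2⟩

end Compactness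

end SimpleGraph

/-- **Existence of flows in locally finite graphs (folklore).** A locally finite graph `G`
has an `f`-flow bounded by a (finite-valued) capacity function `c` iff for every finite
set `F` of vertices, `∑_{x ∈ F} f x` is between `−∑ c(x,y)` over edges entering `F` and
`∑ c(x,y)` over edges leaving `F`. -/
theorem infinite_flow_existence {X : Type*} [DecidableEq X]
    (G : SimpleGraph X) [G.LocallyFinite]
    (f : X → ℝ) (c : X → X → ℝ) (hc : ∀ x y, G.Adj x y → 0 ≤ c x y) :
    (∃ φ : X → X → ℝ, IsFlow G f φ ∧ ∀ x y, G.Adj x y → φ x y ≤ c x y) ↔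
    (∀ F : Finset X,
      -(∑ y ∈ F, ∑ x ∈ (G.neighborFinset y).filter (fun x => x ∉ F), c x y)
        ≤ ∑ x ∈ F, f x ∧
      ∑ x ∈ F, f x ≤
        ∑ x ∈ F, ∑ y ∈ (G.neighborFinset x).filter (fun y => y ∉ F), c x y) := by
  constructor
  · rintro ⟨φ, hφ, hφc⟩ F
    have hin := hφ.neg.sum_le_cutCapacity (c := fun x y => c y x)
      (fun x y h => by linarith [hφ.1 x y h, hφc y x h.symm]) F
    rw [sum_neg_distrib] at hin
    exact ⟨neg_le.2 hin, hφ.sum_le_cutCapacity hφc F⟩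
  · intro hcut
    have hle : ∀ x y, G.Adj x y → c x y ≤ max (c x y) 0 := fun x y _ => le_max_left _ _
    obtain ⟨φ, hφ, hφc⟩ := G.exists_isFlow_le_of_cutCapacity (c := fun x y => max (c x y) 0)
      (fun x y => le_max_right _ _)
      (fun A => (hcut A).2.trans (G.cutCapacity_mono hle A))
      (fun A => by
        rw [sum_neg_distrib, neg_le]
        exact (neg_le_neg (G.cutCapacity_mono (fun x y h => hle y x h.symm) A)).trans (hcut A).1)
    exact ⟨φ, hφ, fun x y h => (hφc x y).trans_eq (max_eq_left (hc x y h))⟩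
end

section
/- Fix d ≥ 1, a free action a : ℤ^d ↷ X, and f : X → ℝ. For every x ∈ X, every compatible sequence (h_0, h_1, …) ∈ lim← ℤ^d/(2^iℤ)^d, every n > 0, and every y in the orbit of x: f(y) − ∑_{γ ∈ ℤ^d, ‖γ‖_∞ = 1} ψ_{x,(h_0,…,h_n)}(y, γ·y) = 2^{−nd} ∑_{z ∈ [y]_{(x,h_n)}} f(z). -/
open Finset

/-- `Γ₁ = {γ ∈ ℤᵈ : ‖γ‖_∞ = 1}`, the generators of the graph `G_a`. -/
def Gamma1 (d : ℕ) : Finset (Fin d → ℤ) :=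
  (Fintype.piFinset fun _ : Fin d => ({-1, 0, 1} : Finset ℤ)).erase 0

/-- `R_N = {(n_1, …, n_d) ∈ ℤᵈ : 0 ≤ n_i < N}`. -/
noncomputable def boxZ (d N : ℕ) : Finset (Fin d → ℤ) :=
  Fintype.piFinset fun _ : Fin d => Finset.Ico (0 : ℤ) (N : ℤ)

/-- For a coset `h + (2ⁿℤ)ᵈ` of `ℤᵈ/(2ⁿℤ)ᵈ` (given by a representative `h`) and `g ∈ ℤᵈ`,
the unique `h' ∈ h + (2ⁿℤ)ᵈ` with `g ∈ h' + R_{2ⁿ}`; so `h' + R_{2ⁿ}` is the block of the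
partition `P_{x,h}` (in coordinates) containing `g`.  This depends only on `h mod 2ⁿ`. -/
def latticeBase (d n : ℕ) (h g : Fin d → ℤ) : Fin d → ℤ :=
  fun i => g i - (g i - h i) % ((2 : ℤ) ^ n)

/-- `∑_{z ∈ [y]_{(x,h)}} f(z)` where `y = a g x` and the block is at level `n` with coset
(representative) `h`. -/
noncomputable def blockSum {X : Type*} (d : ℕ) (a : (Fin d → ℤ) → X → X) (f : X → ℝ) (x : X)
    (n : ℕ) (h g : Fin d → ℤ) : ℝ :=
  ∑ r ∈ boxZ d (2 ^ n), f (a (latticeBase d n h g + r) x)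

/-- The set `U_{x,h}(y,γ)` in coordinates: for `y = a g x`, the element
`z = a (g − i•γ) x ∈ U_{x,h}(y,γ)` is recorded by the index `i ∈ [0, 2^{n−1})`;
the conditions say `z ∈ [y]_{(x,h)}`, `(2^{n−1}γ)·z ∈ [y]_{(x,h)}` and `y = (iγ)·z`. -/
noncomputable def Uidx (d n : ℕ) (h g γ : Fin d → ℤ) : Finset ℤ :=
  (Finset.Ico (0 : ℤ) ((2 : ℤ) ^ (n - 1))).filter fun i =>
    latticeBase d n h (g - i • γ) = latticeBase d n h g ∧
    latticeBase d n h ((g - i • γ) + ((2 : ℤ) ^ (n - 1)) • γ) = latticeBase d n h g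

/-- `φ_{x,h}(y, γ·y) = 2^{−nd} · n_{x,h}(y, γ·y) · ∑_{z ∈ Q_{x,h}(y,γ)} f(z)` in
coordinates (`y = a g x`); here `Q_{x,h}(y,γ)` is the (unique) level-`(n−1)` subblock
containing the elements of `U_{x,h}(y,γ)`, computed from its least index. -/
noncomputable def phiFlow {X : Type*} (d : ℕ) (a : (Fin d → ℤ) → X → X) (f : X → ℝ)
    (x : X) (n : ℕ) (h g γ : Fin d → ℤ) : ℝ :=
  if hs : (Uidx d n h g γ).Nonempty then
    ((Uidx d n h g γ).card : ℝ) / 2 ^ (n * d) *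
      blockSum d a f x (n - 1) h (g - ((Uidx d n h g γ).min' hs) • γ)
  else 0

/-- `ψ_{x,(h_0,…,h_n)}(y, γ·y) = ∑_{i=1}^{n} (φ_{x,h_i}(y, γ·y) − φ_{x,h_i}(γ·y, y))`
in coordinates (`y = a g x`, and `γ·y` has coordinate `g + γ`). -/
noncomputable def psiSeq {X : Type*} (d : ℕ) (a : (Fin d → ℤ) → X → X) (f : X → ℝ)
    (x : X) (h : ℕ → Fin d → ℤ) (n : ℕ) (g γ : Fin d → ℤ) : ℝ :=
  ∑ i ∈ Finset.Icc 1 n,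
    (phiFlow d a f x i (h i) g γ - phiFlow d a f x i (h i) (g + γ) (-γ))

/-!
The identity telescopes in `n`, so it suffices to show that the net flow
`∑_γ (φ_{x,h}(y, γ·y) − φ_{x,h}(γ·y, y))` at level `m + 1` equals
`2^{−md} B_m(y) − 2^{−(m+1)d} B_{m+1}(y)`, where `B_k(y)` is the sum of `f` over the level-`k`
block of `y`. Up to the factor `2^{−(m+1)d}`, `φ_{x,h}(y, γ·y)` is `∑_{0 ≤ i < 2^m} c_γ(y − iγ)`,
where `c_γ(z)` is `B_m(z)` if `z` and `z + 2^mγ` share a level-`(m+1)` block and `0` otherwise.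
After the substitution `γ ↦ −γ`, `φ_{x,h}(γ·y, y)` becomes the same sum started at `y − γ`, so
the net flow telescopes to `∑_γ (c_γ(y) − c_γ(y − 2^mγ))`. The translates `y ± 2^mγ` that stay
in the level-`(m+1)` block of `y` meet each of its `2^d − 1` other level-`m` subblocks exactly
once, which gives `2^d B_m(y) − B_{m+1}(y)`.
-/

lemma sub_emod_eq_iff {M g h v : ℤ} (hM : 0 < M) :
    g - (g - h) % M = v ↔ M ∣ v - h ∧ v ≤ g ∧ g < v + M := by
  constructor
  · rintro rfl
    have := Int.mul_ediv_add_emod (g - h) M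
    exact ⟨⟨(g - h) / M, by linarith⟩, by linarith [Int.emod_nonneg (g - h) hM.ne'],
      by linarith [Int.emod_lt_of_pos (g - h) hM]⟩
  · rintro ⟨⟨k, hk⟩, hv, hg⟩
    have : (g - h) % M = g - v := by
      rw [show g - h = g - v + M * k by linarith, Int.add_mul_emod_self_left,
        Int.emod_eq_of_lt (by linarith) (by linarith)]
    linarith

section LatticeBase

variable {d n : ℕ}

lemma latticeBase_eq_iff {h g v : Fin d → ℤ} :
    latticeBase d n h g = v ↔ ∀ j, 2 ^ n ∣ v j - h j ∧ v j ≤ g j ∧ g j < v j + 2 ^ n := by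
  simp only [funext_iff, latticeBase]
  exact forall_congr' fun j => sub_emod_eq_iff (by positivity)

lemma latticeBase_spec (h g : Fin d → ℤ) (j : Fin d) :
    2 ^ n ∣ latticeBase d n h g j - h j ∧ latticeBase d n h g j ≤ g j ∧
      g j < latticeBase d n h g j + 2 ^ n :=
  latticeBase_eq_iff.mp rfl j

lemma latticeBase_zero (h g : Fin d → ℤ) : latticeBase d 0 h g = g :=
  latticeBase_eq_iff.mpr fun j => by simp

lemma latticeBase_congr {h h' : Fin d → ℤ} (hh : ∀ j, 2 ^ n ∣ h j - h' j) :
    latticeBase d n h = latticeBase d n h' := by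
  funext g
  refine latticeBase_eq_iff.mpr fun j => ?_
  obtain ⟨hdvd, hle, hlt⟩ := latticeBase_spec (n := n) h' g j
  refine ⟨?_, hle, hlt⟩
  simpa using dvd_add hdvd (dvd_neg.mpr (hh j))

lemma latticeBase_add_smul_of_eq {h z γ : Fin d → ℤ} {N t : ℤ}
    (hz : latticeBase d n h z = latticeBase d n h (z + N • γ)) (ht : 0 ≤ t) (htN : t ≤ N) :
    latticeBase d n h (z + t • γ) = latticeBase d n h z := by
  refine latticeBase_eq_iff.mpr fun j => ?_
  obtain ⟨hdvd, hle, hlt⟩ := latticeBase_spec (n := n) h z j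
  obtain ⟨-, hle', hlt'⟩ := latticeBase_spec (n := n) h (z + N • γ) j
  rw [← hz] at hle' hlt'
  simp only [Pi.add_apply, Pi.smul_apply, smul_eq_mul] at hle' hlt' ⊢
  rcases le_total 0 (γ j) with hγ | hγ
  · exact ⟨hdvd, by nlinarith, by nlinarith [mul_le_mul_of_nonneg_right htN hγ]⟩
  · exact ⟨hdvd, by nlinarith [mul_le_mul_of_nonpos_right htN hγ], by nlinarith⟩

end LatticeBase

lemma mem_boxZ {d N : ℕ} {r : Fin d → ℤ} : r ∈ boxZ d N ↔ ∀ j, 0 ≤ r j ∧ r j < N := by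
  simp [boxZ]

lemma card_boxZ (d N : ℕ) : (boxZ d N).card = N ^ d := by
  simp [boxZ]

lemma sum_boxZ_mul {M : Type*} [AddCommMonoid M] {d : ℕ} (K N : ℕ) (F : (Fin d → ℤ) → M) :
    ∑ r ∈ boxZ d (K * N), F r = ∑ δ ∈ boxZ d K, ∑ s ∈ boxZ d N, F ((N : ℤ) • δ + s) := by
  rw [← Finset.sum_product']
  symm
  refine Finset.sum_nbij' (fun p => (N : ℤ) • p.1 + p.2)
    (fun r => (fun j => r j / (N : ℤ), fun j => r j % (N : ℤ))) ?_ ?_ ?_ ?_ (fun _ _ => rfl)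
  · rintro ⟨δ, s⟩ hp
    simp only [Finset.mem_product, mem_boxZ] at hp
    simp only [mem_boxZ, Pi.add_apply, Pi.smul_apply, smul_eq_mul]
    intro j
    obtain ⟨hδ0, hδK⟩ := hp.1 j
    obtain ⟨hs0, hsN⟩ := hp.2 j
    push_cast
    constructor <;> nlinarith
  · intro r hr
    simp only [mem_boxZ] at hr
    simp only [Finset.mem_product, mem_boxZ]
    have hN : ∀ j, 0 < (N : ℤ) := fun j => by
      have := hr j
      push_cast at this
      by_contra!
      nlinarith
    refine ⟨fun j => ⟨Int.ediv_nonneg (hr j).1 (hN j).le, ?_⟩,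
      fun j => ⟨Int.emod_nonneg _ (hN j).ne', Int.emod_lt_of_pos _ (hN j)⟩⟩
    rw [Int.ediv_lt_iff_lt_mul (hN j)]
    exact_mod_cast (hr j).2
  · rintro ⟨δ, s⟩ hp
    simp only [Finset.mem_product, mem_boxZ] at hp
    ext j
    · have hN : (N : ℤ) ≠ 0 := by have := hp.2 j; omega
      simp only [Pi.add_apply, Pi.smul_apply, smul_eq_mul]
      rw [add_comm, Int.add_mul_ediv_left _ _ hN, Int.ediv_eq_zero_of_lt (hp.2 j).1 (hp.2 j).2,
        zero_add]
    · simp [Int.emod_eq_of_lt (hp.2 j).1 (hp.2 j).2]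
  · intro r _
    funext j
    exact Int.mul_ediv_add_emod (r j) N

lemma mem_Gamma1 {d : ℕ} {γ : Fin d → ℤ} :
    γ ∈ Gamma1 d ↔ γ ≠ 0 ∧ ∀ j, γ j = -1 ∨ γ j = 0 ∨ γ j = 1 := by
  simp [Gamma1]

lemma sum_Gamma1_neg {M : Type*} [AddCommMonoid M] {d : ℕ} (F : (Fin d → ℤ) → M) :
    ∑ γ ∈ Gamma1 d, F (-γ) = ∑ γ ∈ Gamma1 d, F γ :=
  Finset.sum_equiv (Equiv.neg _) (fun γ => by
    simp only [mem_Gamma1, Equiv.neg_apply, ne_eq, neg_eq_zero, Pi.neg_apply]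
    refine and_congr_right fun _ => forall_congr' fun j => ?_
    omega) (fun _ _ => rfl)

lemma sum_Gamma1_ite_add_mem_boxZ_two {M : Type*} [AddCommMonoid M] {d : ℕ}
    {e : Fin d → ℤ} (he : e ∈ boxZ d 2) (F : (Fin d → ℤ) → M) :
    ∑ γ ∈ Gamma1 d, (if e + γ ∈ boxZ d 2 then F (e + γ) else 0) =
      ∑ δ ∈ (boxZ d 2).erase e, F δ := by
  rw [← Finset.sum_filter]
  refine Finset.sum_nbij' (e + ·) (· - e) ?_ ?_ (fun _ _ => by simp) (fun _ _ => by simp)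
    (fun _ _ => rfl)
  · intro γ hγ
    simp only [Finset.mem_filter, mem_Gamma1] at hγ
    simpa [hγ.1.1] using hγ.2
  · intro δ hδ
    rw [Finset.mem_erase, mem_boxZ] at hδ
    rw [mem_boxZ] at he
    simp only [Finset.mem_filter, mem_Gamma1, add_sub_cancel, mem_boxZ]
    refine ⟨⟨sub_ne_zero.mpr hδ.1, fun j => ?_⟩, hδ.2⟩
    have := he j; have := hδ.2 j
    simp only [Pi.sub_apply]
    omega

lemma sum_Ico_zero_sub_add_one {G : Type*} [AddCommGroup G] (N : ℕ) (F : ℤ → G) :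
    ∑ i ∈ Finset.Ico (0 : ℤ) N, (F i - F (i + 1)) = F 0 - F N := by
  rw [Int.Ico_eq_finset_map, Finset.sum_map]
  simpa using Finset.sum_range_sub' (fun k : ℕ => F k) N

lemma blockSum_zero {X : Type*} {d : ℕ} (a : (Fin d → ℤ) → X → X) (f : X → ℝ) (x : X)
    (h g : Fin d → ℤ) : blockSum d a f x 0 h g = f (a g x) := by
  have hbox : boxZ d (2 ^ 0) = {0} := by
    ext r
    simp only [mem_boxZ, Finset.mem_singleton, funext_iff, Pi.zero_apply]
    exact forall_congr' fun j => by omega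
  rw [blockSum, hbox, Finset.sum_singleton, latticeBase_zero, add_zero]

section Subcubes

variable {X : Type*} (d : ℕ) (a : (Fin d → ℤ) → X → X) (f : X → ℝ) (x : X) (m : ℕ)

-- The level-`m` subblocks of the level-`(m+1)` block of `g` are indexed by `boxZ d 2 = {0,1}ᵈ`.
def subcubeIndex (h g y : Fin d → ℤ) : Fin d → ℤ :=
  fun j => (y j - latticeBase d (m + 1) h g j) / 2 ^ m

noncomputable def subcubeSum (h g δ : Fin d → ℤ) : ℝ :=
  ∑ r ∈ boxZ d (2 ^ m), f (a (latticeBase d (m + 1) h g + (2 : ℤ) ^ m • δ + r) x)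

variable {d m}

lemma latticeBase_eq_add_smul_subcubeIndex (h g y : Fin d → ℤ) :
    latticeBase d m h y = latticeBase d (m + 1) h g + (2 : ℤ) ^ m • subcubeIndex d m h g y := by
  refine latticeBase_eq_iff.mpr fun j => ?_
  obtain ⟨hdvd, -, -⟩ := latticeBase_spec (n := m + 1) h g j
  have hM : (0 : ℤ) < 2 ^ m := by positivity
  have := Int.mul_ediv_add_emod (y j - latticeBase d (m + 1) h g j) (2 ^ m)
  have := Int.emod_nonneg (y j - latticeBase d (m + 1) h g j) hM.ne'
  have := Int.emod_lt_of_pos (y j - latticeBase d (m + 1) h g j) hM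
  simp only [subcubeIndex, Pi.add_apply, Pi.smul_apply, smul_eq_mul]
  refine ⟨?_, by linarith, by linarith⟩
  rw [add_sub_right_comm]
  exact dvd_add ((pow_dvd_pow 2 m.le_succ).trans hdvd) (dvd_mul_right _ _)

lemma latticeBase_succ_eq_iff {h g y : Fin d → ℤ} :
    latticeBase d (m + 1) h y = latticeBase d (m + 1) h g ↔
      subcubeIndex d m h g y ∈ boxZ d 2 := by
  have hM : (0 : ℤ) < 2 ^ m := by positivity
  rw [latticeBase_eq_iff, mem_boxZ]
  refine forall_congr' fun j => ?_
  simp only [subcubeIndex, Int.ediv_nonneg_iff_of_pos hM, Int.ediv_lt_iff_lt_mul hM,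
    (latticeBase_spec (n := m + 1) h g j).1, true_and]
  push_cast
  constructor <;> rintro ⟨h1, h2⟩ <;> constructor <;> linarith [pow_succ (2 : ℤ) m]

lemma subcubeIndex_mem_self (h g : Fin d → ℤ) : subcubeIndex d m h g g ∈ boxZ d 2 :=
  latticeBase_succ_eq_iff.mp rfl

lemma subcubeIndex_add_smul (h g y γ : Fin d → ℤ) :
    subcubeIndex d m h g (y + (2 : ℤ) ^ m • γ) = subcubeIndex d m h g y + γ := by
  funext j
  simp only [subcubeIndex, Pi.add_apply, Pi.smul_apply, smul_eq_mul]
  rw [add_sub_right_comm, mul_comm, Int.add_mul_ediv_right _ _ (by positivity)]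

lemma blockSum_eq_subcubeSum (h g y : Fin d → ℤ) :
    blockSum d a f x m h y = subcubeSum d a f x m h g (subcubeIndex d m h g y) := by
  rw [blockSum, subcubeSum, latticeBase_eq_add_smul_subcubeIndex h g y]

lemma blockSum_succ_eq_sum_subcubeSum (h g : Fin d → ℤ) :
    blockSum d a f x (m + 1) h g = ∑ δ ∈ boxZ d 2, subcubeSum d a f x m h g δ := by
  rw [blockSum, pow_succ', sum_boxZ_mul]
  refine Finset.sum_congr rfl fun δ _ => Finset.sum_congr rfl fun r _ => ?_
  push_cast
  rw [add_assoc]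

end Subcubes

section Flow

variable {X : Type*} {d : ℕ} (m : ℕ) (a : (Fin d → ℤ) → X → X) (f : X → ℝ) (x : X)

noncomputable def crossingSum (h γ z : Fin d → ℤ) : ℝ :=
  if latticeBase d (m + 1) h z = latticeBase d (m + 1) h (z + (2 : ℤ) ^ m • γ) then
    blockSum d a f x m h z
  else 0

variable {m}

lemma Uidx_succ_eq_filter (h y γ : Fin d → ℤ) :
    Uidx d (m + 1) h y γ = (Finset.Ico 0 (2 ^ m)).filter fun i =>
      latticeBase d (m + 1) h (y - i • γ) =
        latticeBase d (m + 1) h (y - i • γ + (2 : ℤ) ^ m • γ) := by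
  rw [Uidx, Nat.add_sub_cancel]
  refine Finset.filter_congr fun i hi => ⟨fun ⟨h₁, h₂⟩ => h₁.trans h₂.symm, fun hseg => ?_⟩
  rw [Finset.mem_Ico] at hi
  have hy := latticeBase_add_smul_of_eq hseg hi.1 hi.2.le
  rw [sub_add_cancel] at hy
  exact ⟨hy.symm, hseg.symm.trans hy.symm⟩

lemma subcubeIndex_mem_of_mem_Uidx {h y γ : Fin d → ℤ} {i : ℤ}
    (hi : i ∈ Uidx d (m + 1) h y γ) :
    subcubeIndex d m h y (y - i • γ) ∈ boxZ d 2 ∧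
      subcubeIndex d m h y (y - i • γ) + γ ∈ boxZ d 2 := by
  rw [Uidx, Nat.add_sub_cancel, Finset.mem_filter, latticeBase_succ_eq_iff,
    latticeBase_succ_eq_iff, subcubeIndex_add_smul] at hi
  exact hi.2

-- In a coordinate where `γ` moves, `z = y - i • γ` and `z + 2ᵐγ` lie in different halves of
-- the level-`(m+1)` block, which pins down the level-`m` block of `z`.
lemma latticeBase_eq_of_mem_Uidx {h y γ : Fin d → ℤ} {i i' : ℤ}
    (hi : i ∈ Uidx d (m + 1) h y γ) (hi' : i' ∈ Uidx d (m + 1) h y γ) :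
    latticeBase d m h (y - i • γ) = latticeBase d m h (y - i' • γ) := by
  rw [latticeBase_eq_add_smul_subcubeIndex (m := m) h y (y - i • γ),
    latticeBase_eq_add_smul_subcubeIndex (m := m) h y (y - i' • γ)]
  obtain ⟨hq, hqγ⟩ := subcubeIndex_mem_of_mem_Uidx hi
  obtain ⟨hq', hqγ'⟩ := subcubeIndex_mem_of_mem_Uidx hi'
  congr 2
  funext j
  by_cases hγ : γ j = 0
  · simp [subcubeIndex, hγ]
  · rw [mem_boxZ] at hq hqγ hq' hqγ'
    have := hq j; have := hqγ j; have := hq' j; have := hqγ' j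
    simp only [Pi.add_apply] at *
    omega

lemma phiFlow_succ_eq_sum (h y γ : Fin d → ℤ) :
    phiFlow d a f x (m + 1) h y γ =
      (∑ i ∈ Finset.Ico (0 : ℤ) (2 ^ m), crossingSum m a f x h γ (y - i • γ)) /
        2 ^ ((m + 1) * d) := by
  simp only [phiFlow, crossingSum, Nat.add_sub_cancel]
  rw [← Finset.sum_filter, ← Uidx_succ_eq_filter]
  split_ifs with hne
  · rw [Finset.sum_congr rfl fun i hi => by
      rw [blockSum, latticeBase_eq_of_mem_Uidx hi (Finset.min'_mem _ hne), ← blockSum],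
      Finset.sum_const, nsmul_eq_mul, mul_div_right_comm]
  · rw [Finset.not_nonempty_iff_eq_empty.mp hne, Finset.sum_empty, zero_div]

lemma phiFlow_succ_sub (h y γ : Fin d → ℤ) :
    phiFlow d a f x (m + 1) h y γ - phiFlow d a f x (m + 1) h (y - γ) γ =
      (crossingSum m a f x h γ y - crossingSum m a f x h γ (y - (2 : ℤ) ^ m • γ)) /
        2 ^ ((m + 1) * d) := by
  rw [phiFlow_succ_eq_sum, phiFlow_succ_eq_sum, ← sub_div, ← Finset.sum_sub_distrib]
  have key := sum_Ico_zero_sub_add_one (2 ^ m) fun i => crossingSum m a f x h γ (y - i • γ)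
  simp only [Nat.cast_pow, Nat.cast_ofNat, zero_smul, sub_zero, add_smul, one_smul] at key
  simp only [sub_sub y γ, add_comm γ, key]

lemma crossingSum_self (h g γ : Fin d → ℤ) :
    crossingSum m a f x h γ g = if subcubeIndex d m h g g + γ ∈ boxZ d 2 then
      subcubeSum d a f x m h g (subcubeIndex d m h g g) else 0 := by
  have hcond : latticeBase d (m + 1) h g = latticeBase d (m + 1) h (g + (2 : ℤ) ^ m • γ) ↔
      subcubeIndex d m h g g + γ ∈ boxZ d 2 := by
    rw [eq_comm, latticeBase_succ_eq_iff, subcubeIndex_add_smul]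
  rw [crossingSum, if_congr hcond rfl rfl, blockSum_eq_subcubeSum a f x h g g]

lemma crossingSum_neg_add_smul (h g γ : Fin d → ℤ) :
    crossingSum m a f x h (-γ) (g + (2 : ℤ) ^ m • γ) =
      if subcubeIndex d m h g g + γ ∈ boxZ d 2 then
        subcubeSum d a f x m h g (subcubeIndex d m h g g + γ) else 0 := by
  have hcond : latticeBase d (m + 1) h (g + (2 : ℤ) ^ m • γ) =
      latticeBase d (m + 1) h (g + (2 : ℤ) ^ m • γ + (2 : ℤ) ^ m • -γ) ↔
        subcubeIndex d m h g g + γ ∈ boxZ d 2 := by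
    rw [smul_neg, add_neg_cancel_right, latticeBase_succ_eq_iff, subcubeIndex_add_smul]
  rw [crossingSum, if_congr hcond rfl rfl, blockSum_eq_subcubeSum a f x h g,
    subcubeIndex_add_smul]

lemma sum_Gamma1_phiFlow_sub (h g : Fin d → ℤ) :
    ∑ γ ∈ Gamma1 d, (phiFlow d a f x (m + 1) h g γ - phiFlow d a f x (m + 1) h (g + γ) (-γ)) =
      blockSum d a f x m h g / 2 ^ (m * d) - blockSum d a f x (m + 1) h g / 2 ^ ((m + 1) * d) := by
  set e := subcubeIndex d m h g g
  set T := subcubeSum d a f x m h g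
  calc _ = ∑ γ ∈ Gamma1 d,
        (phiFlow d a f x (m + 1) h g γ - phiFlow d a f x (m + 1) h (g - γ) γ) := by
        rw [Finset.sum_sub_distrib, Finset.sum_sub_distrib,
          ← sum_Gamma1_neg fun γ => phiFlow d a f x (m + 1) h (g - γ) γ]
        simp only [sub_neg_eq_add]
    _ = (∑ γ ∈ Gamma1 d, (crossingSum m a f x h γ g -
          crossingSum m a f x h (-γ) (g + (2 : ℤ) ^ m • γ))) / 2 ^ ((m + 1) * d) := by
        rw [Finset.sum_congr rfl fun γ _ => phiFlow_succ_sub a f x h g γ, ← Finset.sum_div,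
          Finset.sum_sub_distrib, Finset.sum_sub_distrib,
          ← sum_Gamma1_neg fun γ => crossingSum m a f x h γ (g - (2 : ℤ) ^ m • γ)]
        simp only [smul_neg, sub_neg_eq_add]
    _ = (∑ δ ∈ boxZ d 2, (T e - T δ)) / 2 ^ ((m + 1) * d) := by
        rw [← Finset.sum_erase (f := fun δ => T e - T δ) _ (sub_self _),
          ← sum_Gamma1_ite_add_mem_boxZ_two (e := e) (subcubeIndex_mem_self h g)]
        refine congrArg (· / _) (Finset.sum_congr rfl fun γ _ => ?_)
        rw [crossingSum_neg_add_smul, crossingSum_self, ite_sub_ite, sub_zero]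
    _ = _ := by
        rw [Finset.sum_sub_distrib, Finset.sum_const, card_boxZ, nsmul_eq_mul,
          blockSum_eq_subcubeSum a f x h g g, blockSum_succ_eq_sum_subcubeSum]
        push_cast
        rw [add_mul, one_mul, pow_add]
        field_simp
        rfl

end Flow

theorem error_lemma_general {X : Type*} (d : ℕ)
    (a : (Fin d → ℤ) → X → X)
    (f : X → ℝ) (x : X)
    (h : ℕ → Fin d → ℤ)
    (hcompat : ∀ i : ℕ, 0 < i → ∀ j : Fin d, ((2 : ℤ) ^ (i - 1)) ∣ (h i j - h (i - 1) j))
    (n : ℕ) (g : Fin d → ℤ) :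
    f (a g x) - ∑ γ ∈ Gamma1 d, psiSeq d a f x h n g γ
      = (1 / 2 ^ (n * d)) * blockSum d a f x n (h n) g := by
  induction n with
  | zero => simp [psiSeq, blockSum_zero]
  | succ k ih =>
    have hψ : ∀ γ, psiSeq d a f x h (k + 1) g γ = psiSeq d a f x h k g γ +
        (phiFlow d a f x (k + 1) (h (k + 1)) g γ -
          phiFlow d a f x (k + 1) (h (k + 1)) (g + γ) (-γ)) :=
      fun γ => Finset.sum_Icc_succ_top (by omega) _
    have hblock : blockSum d a f x k (h k) g = blockSum d a f x k (h (k + 1)) g := by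
      have hdvd : ∀ j, (2 : ℤ) ^ k ∣ h k j - h (k + 1) j := fun j =>
        dvd_sub_comm.mp (by simpa using hcompat (k + 1) k.succ_pos j)
      rw [blockSum, blockSum, latticeBase_congr hdvd]
    rw [Finset.sum_congr rfl fun γ _ => hψ γ, Finset.sum_add_distrib, ← sub_sub, ih, hblock,
      sum_Gamma1_phiFlow_sub]
    ring

/-- **The error lemma.** For a free action `a : ℤᵈ ↷ X`, a compatible sequence
`(h_0, h_1, …)` in the inverse limit of `ℤᵈ/(2ⁱℤ)ᵈ` (given by representatives with
`h_i ≡ h_{i−1} mod 2^{i−1}`), every `n > 0` and every point `y = a g x` of the orbit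
of `x`:
`f(y) − ∑_{‖γ‖_∞ = 1} ψ_{x,(h_0,…,h_n)}(y, γ·y) = 2^{−nd} ∑_{z ∈ [y]_{(x,h_n)}} f(z)`. -/
theorem error_lemma {X : Type*} (d : ℕ) (hd : 1 ≤ d)
    (a : (Fin d → ℤ) → X → X)
    (ha0 : ∀ x : X, a 0 x = x)
    (haadd : ∀ (g g' : Fin d → ℤ) (x : X), a (g + g') x = a g (a g' x))
    (hfree : ∀ (g : Fin d → ℤ) (x : X), a g x = x → g = 0)
    (f : X → ℝ) (x : X)
    (h : ℕ → Fin d → ℤ)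
    (hcompat : ∀ i : ℕ, 0 < i → ∀ j : Fin d, ((2 : ℤ) ^ (i - 1)) ∣ (h i j - h (i - 1) j))
    (n : ℕ) (hn : 0 < n) (g : Fin d → ℤ) :
    f (a g x) - ∑ γ ∈ Gamma1 d, psiSeq d a f x h n g γ
      = (1 / 2 ^ (n * d)) * blockSum d a f x n (h n) g :=
  error_lemma_general d a f x h hcompat n g
end

section
/- Suppose G is a locally finite graph on vertex set X, c is a capacity function for G taking integer values, and f : X → ℤ takes integer values. If G has an f-flow bounded by c, then G has an integral f-flow bounded by c. -/
/-!
For a finite set `S` of vertices, the flow `φ` can be rounded to a flow that is integral on the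
edges meeting `S`, conserved at `S`, and lies between `⌊φ⌋` and `⌈φ⌉`. Indeed, since the net
flow at each vertex of `S` is an integer, no vertex of `S` meets exactly one fractional edge. By
counting, the signed incidence matrix of the fractional edges against `S` then has a nontrivial
kernel, i.e. there is a nonzero circulation on the fractional edges, balanced at `S`; pushing flow
along it until the first fractional edge becomes integral reduces the number of fractional edges.

The integer-valued functions between `⌊φ⌋` and `⌈φ⌉` form a compact space (Tychonoff), in which
the flows satisfying conservation at a given vertex form a closed set. By the finite case any
finitely many of these sets meet, hence all of them do.
-/

open Finset Matrix

local notation "ℤᵣ" => AddMonoidHom.range (Int.castAddHom ℝ)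

open scoped Classical in
theorem AddSubgroup.card_filter_notMem_ne_one {G ι : Type*} [AddCommGroup G] (H : AddSubgroup G)
    (s : Finset ι) (g : ι → G) (hs : ∑ i ∈ s, g i ∈ H) : #{i ∈ s | g i ∉ H} ≠ 1 := by
  intro h
  obtain ⟨j, hj⟩ := Finset.card_eq_one.mp h
  have hmem : ∀ i, i ∈ s ∧ g i ∉ H ↔ i = j := by simpa [Finset.ext_iff] using hj
  obtain ⟨hjs, hjH⟩ := (hmem j).mpr rfl
  have hrest : ∑ i ∈ s.erase j, g i ∈ H := H.sum_mem fun i hi => by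
    by_contra hiH
    exact (mem_erase.mp hi).1 ((hmem i).mp ⟨(mem_erase.mp hi).2, hiH⟩)
  rw [← add_sum_erase s g hjs] at hs
  exact hjH ((H.add_mem_cancel_right hrest).mp hs)

theorem Matrix.exists_mulVec_eq_zero_of_card_lt {K m n : Type*} [Field K] [Fintype m]
    [Fintype n] (M : Matrix m n K) (hcard : Fintype.card m < Fintype.card n) :
    ∃ v ≠ 0, M *ᵥ v = 0 := by
  obtain ⟨v, hv, hv0⟩ := Submodule.exists_mem_ne_zero_of_ne_bot
    (LinearMap.ker_ne_bot_of_finrank_lt (f := M.mulVecLin) (by simpa using hcard))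
  exact ⟨v, hv0, hv⟩

theorem Matrix.exists_mulVec_eq_zero_of_vecMul_eq_zero {K m n : Type*} [Field K] [Fintype m]
    [Fintype n] [DecidableEq m] (M : Matrix m n K) (hcard : Fintype.card m ≤ Fintype.card n)
    {u : m → K} (hu : u ≠ 0) (huM : u ᵥ* M = 0) : ∃ v ≠ 0, M *ᵥ v = 0 := by
  rcases hcard.lt_or_eq with hlt | heq
  · exact M.exists_mulVec_eq_zero_of_card_lt hlt
  have hsurj : ¬ Function.Surjective M.mulVecLin := by
    obtain ⟨i, hi⟩ := Function.ne_iff.mp hu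
    rintro hsurj
    obtain ⟨v, hv⟩ := hsurj (Pi.single i 1)
    have := dotProduct_mulVec u M v
    simp_all [dotProduct_single]
  rw [← LinearMap.injective_iff_surjective_of_finrank_eq_finrank (by simpa using heq.symm),
    injective_iff_map_eq_zero] at hsurj
  obtain ⟨v, hv, hv0⟩ := not_forall₂.mp hsurj
  exact ⟨v, hv0, hv⟩

theorem exists_balanced_of_card_ne_one {K V : Type*} [Field K] [DecidableEq V]
    {C : Finset (V × V)}
    (hC : C.Nonempty) {R : Finset V}
    (hR : ∀ x ∈ R, #{p ∈ C | p.1 = x} + #{p ∈ C | p.2 = x} ≠ 1) :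
    ∃ δ : V × V → K, (∀ p ∉ C, δ p = 0) ∧ (∃ p ∈ C, δ p ≠ 0) ∧
      ∀ x ∈ R, ∑ p ∈ C with p.1 = x, δ p = ∑ p ∈ C with p.2 = x, δ p := by
  set R' := R.filter fun x => #{p ∈ C | p.1 = x} + #{p ∈ C | p.2 = x} ≠ 0
  let M : Matrix R' C K := fun x p =>
    (if p.1.1 = x.1 then 1 else 0) - (if p.1.2 = x.1 then 1 else 0)
  have hcount : 2 * #R' ≤ #{p ∈ C | p.1 ∈ R'} + #{p ∈ C | p.2 ∈ R'} := by
    rw [← sum_card_fiberwise_eq_card_filter, ← sum_card_fiberwise_eq_card_filter,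
      ← sum_add_distrib, mul_comm, ← smul_eq_mul, ← sum_const]
    refine sum_le_sum fun x hx => ?_
    have := hR x (mem_filter.mp hx).1
    have := (mem_filter.mp hx).2
    omega
  -- Counting gives `#R' ≤ #C`; if equality holds, every edge has both ends in `R'`, so the
  -- rows of `M` sum to zero.
  obtain ⟨v, hv, hMv⟩ : ∃ v ≠ 0, M *ᵥ v = 0 := by
    rcases lt_or_ge #R' #C with hlt | hge
    · exact M.exists_mulVec_eq_zero_of_card_lt (by simpa using hlt)
    have h₁ := card_filter_le C (·.1 ∈ R')
    have h₂ := card_filter_le C (·.2 ∈ R')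
    have hends : ∀ p ∈ C, p.1 ∈ R' ∧ p.2 ∈ R' := fun p hp =>
      ⟨card_filter_eq_iff.mp (show #{p ∈ C | p.1 ∈ R'} = #C by omega) p hp,
        card_filter_eq_iff.mp (show #{p ∈ C | p.2 ∈ R'} = #C by omega) p hp⟩
    have hle : #R' ≤ #C := by omega
    refine M.exists_mulVec_eq_zero_of_vecMul_eq_zero (by simpa using hle) (u := 1) ?_ ?_
    · obtain ⟨x, hx⟩ := card_pos.mp (hC.card_pos.trans_le hge)
      exact fun h => one_ne_zero (congrFun h ⟨x, hx⟩)
    · funext p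
      have hp := hends p.1 p.2
      simp only [vecMul, dotProduct, Pi.one_apply, one_mul, M, Pi.zero_apply, sum_sub_distrib]
      rw [sum_coe_sort R' (fun x => if p.1.1 = x then (1 : K) else 0),
        sum_coe_sort R' (fun x => if p.1.2 = x then (1 : K) else 0), sum_ite_eq, sum_ite_eq,
        if_pos hp.1, if_pos hp.2, sub_self]
  refine ⟨fun p => if h : p ∈ C then v ⟨p, h⟩ else 0, fun p hp => dif_neg hp, ?_, ?_⟩
  · obtain ⟨p, hp⟩ := Function.ne_iff.mp hv
    exact ⟨p, p.2, by simpa using hp⟩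
  intro x hx
  by_cases hxR' : x ∈ R'
  · have hx0 := congrFun hMv ⟨x, hxR'⟩
    simp only [mulVec, dotProduct, M, sub_mul, ite_mul, one_mul, zero_mul, sum_sub_distrib,
      Pi.zero_apply, sub_eq_zero] at hx0
    rw [sum_filter, sum_filter, ← sum_coe_sort C, ← sum_coe_sort C]
    simpa using hx0
  · have h0 : #{p ∈ C | p.1 = x} + #{p ∈ C | p.2 = x} = 0 := by
      simpa only [R', mem_filter, hx, true_and, not_not] using hxR'
    rw [card_eq_zero.mp (by omega : #{p ∈ C | p.1 = x} = 0),
      card_eq_zero.mp (by omega : #{p ∈ C | p.2 = x} = 0)]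

theorem exists_step_to_integer {ι : Type*} (s : Finset ι) (a d : ι → ℝ)
    (hd : ∃ i ∈ s, d i ≠ 0) :
    ∃ τ : ℝ, (∀ i ∈ s, a i + τ * d i ∈ Set.Icc (⌊a i⌋ : ℝ) ⌈a i⌉) ∧
      ∃ i ∈ s, a i + τ * d i ∈ ℤᵣ := by
  -- the time at which `a i + τ * d i` reaches the integer it moves towards
  set g : ι → ℝ := fun i => (if 0 < d i then ⌈a i⌉ - a i else ⌊a i⌋ - a i) / d i
  obtain ⟨i, hi, hmin⟩ :=
    (s.filter (d · ≠ 0)).exists_min_image g (by simpa [Finset.Nonempty] using hd)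
  have hg : 0 ≤ g i := by
    rcases (mem_filter.mp hi).2.lt_or_gt with hneg | hpos
    · simp only [g, if_neg hneg.not_gt]
      exact div_nonneg_of_nonpos (by linarith [Int.floor_le (a i)]) hneg.le
    · simp only [g, if_pos hpos]
      exact div_nonneg (by linarith [Int.le_ceil (a i)]) hpos.le
  refine ⟨g i, fun j hj => ?_, i, (mem_filter.mp hi).1, ?_⟩
  · rcases lt_trichotomy (d j) 0 with hneg | hzero | hpos
    · have := hmin j (mem_filter.mpr ⟨hj, hneg.ne⟩)
      simp only [g, if_neg hneg.not_gt, le_div_iff_of_neg hneg] at this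
      constructor <;> nlinarith [Int.le_ceil (a j)]
    · simp [hzero, Int.floor_le, Int.le_ceil]
    · have := hmin j (mem_filter.mpr ⟨hj, hpos.ne'⟩)
      simp only [g, if_pos hpos, le_div_iff₀ hpos] at this
      constructor <;> nlinarith [Int.floor_le (a j)]
  · rcases (mem_filter.mp hi).2.lt_or_gt with hneg | hpos
    · refine ⟨⌊a i⌋, ?_⟩
      simp only [g, if_neg hneg.not_gt, div_mul_cancel₀ _ hneg.ne, Int.coe_castAddHom]
      ring
    · refine ⟨⌈a i⌉, ?_⟩
      simp only [g, if_pos hpos, div_mul_cancel₀ _ hpos.ne', Int.coe_castAddHom]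
      ring

theorem mem_Icc_floor_ceil_trans {a b c : ℝ} (hab : b ∈ Set.Icc (⌊a⌋ : ℝ) ⌈a⌉)
    (hbc : c ∈ Set.Icc (⌊b⌋ : ℝ) ⌈b⌉) : c ∈ Set.Icc (⌊a⌋ : ℝ) ⌈a⌉ :=
  ⟨(Int.cast_le.mpr (Int.le_floor.mpr hab.1)).trans hbc.1,
    hbc.2.trans (Int.cast_le.mpr (Int.ceil_le.mpr hab.2))⟩

theorem neg_mem_Icc_floor_ceil {a b : ℝ} (h : b ∈ Set.Icc (⌊a⌋ : ℝ) ⌈a⌉) :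
    -b ∈ Set.Icc (⌊-a⌋ : ℝ) ⌈-a⌉ := by
  rw [Int.floor_neg, Int.ceil_neg, Int.cast_neg, Int.cast_neg]
  exact ⟨neg_le_neg h.2, neg_le_neg h.1⟩

def roundings {X : Type*} (φ : X → X → ℝ) : Set (X → X → ℤ) :=
  Set.univ.pi fun x => Set.univ.pi fun y => Set.Icc ⌊φ x y⌋ ⌈φ x y⌉

theorem isCompact_roundings {X : Type*} (φ : X → X → ℝ) : IsCompact (roundings φ) :=
  isCompact_univ_pi fun _ => isCompact_univ_pi fun _ => isCompact_Icc

namespace SimpleGraph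

variable {X : Type*} (G : SimpleGraph X) [G.LocallyFinite]

theorem sum_neighborFinset_eq_sum_filter_fst [DecidableEq X] {C : Finset (X × X)}
    (hC : ∀ p ∈ C, G.Adj p.1 p.2) {δ : X × X → ℝ} (hδ : ∀ p ∉ C, δ p = 0) (x : X) :
    ∑ y ∈ G.neighborFinset x, δ (x, y) = ∑ p ∈ C with p.1 = x, δ p := by
  rw [show ∑ y ∈ G.neighborFinset x, δ (x, y) = ∑ p ∈ {x} ×ˢ G.neighborFinset x, δ p by
    rw [sum_product, sum_singleton]]
  refine (sum_subset (fun p hp => ?_) fun p hp hpC => hδ p fun h => hpC ?_).symm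
  · obtain ⟨hpC, rfl⟩ := mem_filter.mp hp
    simpa using hC p hpC
  · exact mem_filter.mpr ⟨h, (mem_singleton.mp (mem_product.mp hp).1)⟩

theorem sum_neighborFinset_eq_sum_filter_snd [DecidableEq X] {C : Finset (X × X)}
    (hC : ∀ p ∈ C, G.Adj p.1 p.2) {δ : X × X → ℝ} (hδ : ∀ p ∉ C, δ p = 0) (x : X) :
    ∑ y ∈ G.neighborFinset x, δ (y, x) = ∑ p ∈ C with p.2 = x, δ p := by
  rw [show ∑ y ∈ G.neighborFinset x, δ (y, x) = ∑ p ∈ G.neighborFinset x ×ˢ {x}, δ p by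
    rw [sum_product_right, sum_singleton]]
  refine (sum_subset (fun p hp => ?_) fun p hp hpC => hδ p fun h => hpC ?_).symm
  · obtain ⟨hpC, rfl⟩ := mem_filter.mp hp
    simpa using (hC p hpC).symm
  · exact mem_filter.mpr ⟨h, (mem_singleton.mp (mem_product.mp hp).2)⟩

section fracEdges

variable [LinearOrder X]

open scoped Classical in
noncomputable def fracEdges (S : Finset X) (ψ : X → X → ℝ) : Finset (X × X) :=
  (S.biUnion fun x => {x} ×ˢ G.neighborFinset x ∪ G.neighborFinset x ×ˢ {x}).filter
    fun p => p.1 < p.2 ∧ ψ p.1 p.2 ∉ ℤᵣ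

variable {G} {S : Finset X} {ψ : X → X → ℝ}

theorem mem_fracEdges {p : X × X} :
    p ∈ G.fracEdges S ψ ↔
      G.Adj p.1 p.2 ∧ (p.1 ∈ S ∨ p.2 ∈ S) ∧ p.1 < p.2 ∧ ψ p.1 p.2 ∉ ℤᵣ := by
  obtain ⟨x, y⟩ := p
  simp only [fracEdges, mem_filter, mem_biUnion, mem_union, mem_product, mem_singleton,
    mem_neighborFinset]
  constructor
  · rintro ⟨⟨z, hz, ⟨rfl, h⟩ | ⟨h, rfl⟩⟩, hlt⟩
    exacts [⟨h, .inl hz, hlt⟩, ⟨h.symm, .inr hz, hlt⟩]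
  · rintro ⟨h, hx | hy, hlt⟩
    exacts [⟨⟨x, hx, .inl ⟨rfl, h⟩⟩, hlt⟩, ⟨⟨y, hy, .inr ⟨h.symm, rfl⟩⟩, hlt⟩]

open scoped Classical in
theorem card_fracEdges_fst_add_card_fracEdges_snd (hanti : ∀ x y, G.Adj x y → ψ x y = -ψ y x)
    {x : X} (hx : x ∈ S) :
    #{p ∈ G.fracEdges S ψ | p.1 = x} + #{p ∈ G.fracEdges S ψ | p.2 = x} =
      #{y ∈ G.neighborFinset x | ψ x y ∉ ℤᵣ} := by
  have hneg : ∀ y, G.Adj x y → (ψ y x ∈ ℤᵣ ↔ ψ x y ∈ ℤᵣ) := fun y h => by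
    rw [hanti x y h, neg_mem_iff]
  have hfst : #{p ∈ G.fracEdges S ψ | p.1 = x} = #{y ∈ G.neighborFinset x | ψ x y ∉ ℤᵣ ∧ x < y} :=
    card_nbij' Prod.snd (Prod.mk x) (fun p hp => by aesop (add simp mem_fracEdges))
      (fun y hy => by aesop (add simp mem_fracEdges)) (fun p hp => by aesop) (fun _ _ => rfl)
  have hsnd : #{p ∈ G.fracEdges S ψ | p.2 = x} =
      #{y ∈ G.neighborFinset x | ψ x y ∉ ℤᵣ ∧ ¬ x < y} := by
    refine card_nbij' Prod.fst (fun y => (y, x)) (fun p hp => ?_) (fun y hy => ?_)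
      (fun p hp => by aesop) (fun _ _ => rfl)
    · obtain ⟨hpC, rfl⟩ := mem_filter.mp hp
      obtain ⟨hadj, -, hlt, hfrac⟩ := mem_fracEdges.mp hpC
      simp only [coe_filter, Set.mem_ofPred_eq, mem_neighborFinset]
      exact ⟨hadj.symm, by rwa [← hneg _ hadj.symm], hlt.not_gt⟩
    · obtain ⟨hadj, hfrac, hle⟩ := mem_filter.mp hy
      rw [mem_neighborFinset] at hadj
      simp only [coe_filter, Set.mem_ofPred_eq, mem_fracEdges]
      exact ⟨⟨hadj.symm, .inr hx, (not_lt.mp hle).lt_of_ne hadj.ne', by rwa [hneg _ hadj]⟩, trivial⟩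
  rw [hfst, hsnd, ← filter_filter, ← filter_filter, card_filter_add_card_filter_not]

theorem integral_of_fracEdges_eq_empty (hanti : ∀ x y, G.Adj x y → ψ x y = -ψ y x)
    (hS : G.fracEdges S ψ = ∅) {x y : X} (hx : x ∈ S) (hadj : G.Adj x y) : ψ x y ∈ ℤᵣ := by
  by_contra hfrac
  rcases lt_or_gt_of_ne hadj.ne with hlt | hgt
  · exact notMem_empty (x, y) (hS ▸ mem_fracEdges.mpr ⟨hadj, .inl hx, hlt, hfrac⟩)
  · refine notMem_empty (y, x) (hS ▸ mem_fracEdges.mpr ⟨hadj.symm, .inr hx, hgt, ?_⟩)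
    rwa [hanti y x hadj.symm, neg_mem_iff]

theorem exists_fracEdges_ssubset (hanti : ∀ x y, G.Adj x y → ψ x y = -ψ y x)
    (hS : ∀ x ∈ S, ∑ y ∈ G.neighborFinset x, ψ x y ∈ ℤᵣ) (hne : (G.fracEdges S ψ).Nonempty) :
    ∃ ψ' : X → X → ℝ, (∀ x y, G.Adj x y → ψ' x y = -ψ' y x) ∧
      (∀ x ∈ S, ∑ y ∈ G.neighborFinset x, ψ' x y = ∑ y ∈ G.neighborFinset x, ψ x y) ∧
      (∀ x y, ψ' x y ∈ Set.Icc (⌊ψ x y⌋ : ℝ) ⌈ψ x y⌉) ∧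
      G.fracEdges S ψ' ⊂ G.fracEdges S ψ := by
  set C := G.fracEdges S ψ
  have hCadj : ∀ p ∈ C, G.Adj p.1 p.2 := fun p hp => (mem_fracEdges.mp hp).1
  have hCswap : ∀ p ∈ C, (p.2, p.1) ∉ C := fun p hp hq =>
    (mem_fracEdges.mp hp).2.2.1.not_gt (mem_fracEdges.mp hq).2.2.1
  obtain ⟨δ, hδC, hδne, hbal⟩ := exists_balanced_of_card_ne_one (K := ℝ) hne (R := S) fun x hx => by
    rw [card_fracEdges_fst_add_card_fracEdges_snd hanti hx]
    exact AddSubgroup.card_filter_notMem_ne_one _ _ _ (hS x hx)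
  obtain ⟨τ, hτ, p₀, hp₀C, hp₀⟩ := exists_step_to_integer C (fun p => ψ p.1 p.2) δ hδne
  set ψ' : X → X → ℝ := fun x y => ψ x y + τ * (δ (x, y) - δ (y, x)) with hψ'
  have hanti' : ∀ x y, G.Adj x y → ψ' x y = -ψ' y x := fun x y hxy => by
    simp only [hψ', hanti x y hxy]; ring
  have hψ'C : ∀ p ∈ C, ψ' p.1 p.2 = ψ p.1 p.2 + τ * δ p := fun p hp => by
    simp [hψ', hδC _ (hCswap p hp)]
  have hψ'off : ∀ x y, (x, y) ∉ C → (y, x) ∉ C → ψ' x y = ψ x y := fun x y h₁ h₂ => by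
    simp [hψ', hδC _ h₁, hδC _ h₂]
  have hsub : G.fracEdges S ψ' ⊆ C := fun p hp => by
    obtain ⟨hadj, hinc, hlt, hfrac⟩ := mem_fracEdges.mp hp
    by_contra hpC
    have hq : (p.2, p.1) ∉ C := fun hq => (mem_fracEdges.mp hq).2.2.1.not_gt hlt
    rw [hψ'off _ _ hpC hq] at hfrac
    exact hpC (mem_fracEdges.mpr ⟨hadj, hinc, hlt, hfrac⟩)
  refine ⟨ψ', hanti', fun x hx => ?_, fun x y => ?_, (ssubset_iff_of_subset hsub).mpr
    ⟨p₀, hp₀C, fun h => (mem_fracEdges.mp h).2.2.2 (hψ'C p₀ hp₀C ▸ hp₀)⟩⟩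
  · simp only [hψ', sum_add_distrib, ← mul_sum, sum_sub_distrib,
      sum_neighborFinset_eq_sum_filter_fst G hCadj hδC,
      sum_neighborFinset_eq_sum_filter_snd G hCadj hδC]
    rw [hbal x hx, sub_self, mul_zero, add_zero]
  · by_cases hxy : (x, y) ∈ C
    · exact hψ'C _ hxy ▸ hτ _ hxy
    by_cases hyx : (y, x) ∈ C
    · have hadj := (hCadj _ hyx).symm
      rw [hanti' x y hadj, hanti x y hadj]
      exact neg_mem_Icc_floor_ceil (hψ'C _ hyx ▸ hτ _ hyx)
    · rw [hψ'off x y hxy hyx]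
      exact ⟨Int.floor_le _, Int.le_ceil _⟩

end fracEdges

theorem exists_rounding (S : Finset X) {ψ : X → X → ℝ}
    (hanti : ∀ x y, G.Adj x y → ψ x y = -ψ y x)
    (hS : ∀ x ∈ S, ∑ y ∈ G.neighborFinset x, ψ x y ∈ ℤᵣ) :
    ∃ ψ' : X → X → ℝ, (∀ x y, G.Adj x y → ψ' x y = -ψ' y x) ∧
      (∀ x ∈ S, ∑ y ∈ G.neighborFinset x, ψ' x y = ∑ y ∈ G.neighborFinset x, ψ x y) ∧
      (∀ x y, ψ' x y ∈ Set.Icc (⌊ψ x y⌋ : ℝ) ⌈ψ x y⌉) ∧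
      ∀ x ∈ S, ∀ y, G.Adj x y → ψ' x y ∈ ℤᵣ := by
  let : LinearOrder X := IsWellOrder.linearOrder WellOrderingRel
  induction hn : #(G.fracEdges S ψ) using Nat.strong_induction_on generalizing ψ with
  | _ n ih =>
  rcases (G.fracEdges S ψ).eq_empty_or_nonempty with hempty | hne
  · exact ⟨ψ, hanti, fun _ _ => rfl, fun _ _ => ⟨Int.floor_le _, Int.le_ceil _⟩,
      fun x hx y hxy => integral_of_fracEdges_eq_empty hanti hempty hx hxy⟩
  obtain ⟨ψ₁, hanti₁, hsum₁, hbox₁, hlt⟩ := G.exists_fracEdges_ssubset hanti hS hne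
  obtain ⟨ψ₂, hanti₂, hsum₂, hbox₂, hint₂⟩ :=
    ih _ (hn ▸ card_lt_card hlt) hanti₁ (fun x hx => hsum₁ x hx ▸ hS x hx) rfl
  exact ⟨ψ₂, hanti₂, fun x hx => (hsum₂ x hx).trans (hsum₁ x hx),
    fun x y => mem_Icc_floor_ceil_trans (hbox₁ x y) (hbox₂ x y), hint₂⟩

def intFlowsAt (f : X → ℤ) (x : X) : Set (X → X → ℤ) :=
  {Ψ | (∀ y ∈ G.neighborFinset x, Ψ x y = -Ψ y x) ∧ ∑ y ∈ G.neighborFinset x, Ψ x y = f x}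

theorem isClosed_intFlowsAt (f : X → ℤ) (x : X) : IsClosed (G.intFlowsAt f x) := by
  simp only [intFlowsAt, Set.ofPred_and, Set.ofPred_forall]
  exact (isClosed_biInter fun _ _ => isClosed_eq (by fun_prop) (by fun_prop)).inter
    (isClosed_eq (by fun_prop) continuous_const)

theorem roundings_inter_biInter_intFlowsAt_nonempty (f : X → ℤ) {φ : X → X → ℝ}
    (hφ : IsFlow G (fun x => (f x : ℝ)) φ) (S : Finset X) :
    (roundings φ ∩ ⋂ x ∈ S, G.intFlowsAt f x).Nonempty := by
  obtain ⟨ψ, hanti, hsum, hbox, hint⟩ :=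
    G.exists_rounding S hφ.1 fun x _ => hφ.2 x ▸ ⟨f x, rfl⟩
  have hfloor : ∀ x ∈ S, ∀ y ∈ G.neighborFinset x, (⌊ψ x y⌋ : ℝ) = ψ x y := fun x hx y hy => by
    obtain ⟨m, hm⟩ := hint x hx y ((G.mem_neighborFinset x y).mp hy)
    simp [← hm]
  refine ⟨fun x y => ⌊ψ x y⌋, fun x _ y _ => ?_,
    Set.mem_iInter₂.mpr fun x hx => ⟨fun y hy => ?_, ?_⟩⟩
  · exact ⟨Int.le_floor.mpr (hbox x y).1,
      (Int.floor_le_floor (hbox x y).2).trans_eq (Int.floor_intCast _)⟩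
  · have hxy := (G.mem_neighborFinset x y).mp hy
    obtain ⟨m, hm⟩ := hint x hx y hxy
    show ⌊ψ x y⌋ = -⌊ψ y x⌋
    rw [hanti y x hxy.symm, ← hm, Int.coe_castAddHom, ← Int.cast_neg, Int.floor_intCast,
      Int.floor_intCast, neg_neg]
  · have : ((∑ y ∈ G.neighborFinset x, ⌊ψ x y⌋ : ℤ) : ℝ) = f x := by
      rw [Int.cast_sum, sum_congr rfl (hfloor x hx), hsum x hx, hφ.2 x]
    exact_mod_cast this

end SimpleGraph

theorem integral_flow_theorem_general {X : Type*} (G : SimpleGraph X) [G.LocallyFinite]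
    (c : X → X → ℝ)
    (hcint : ∀ x y, G.Adj x y → ∃ m : ℤ, c x y = (m : ℝ))
    (f : X → ℤ)
    (hflow : ∃ φ : X → X → ℝ, IsFlow G (fun x => (f x : ℝ)) φ ∧
      ∀ x y, G.Adj x y → φ x y ≤ c x y) :
    ∃ ψ : X → X → ℝ, IsFlow G (fun x => (f x : ℝ)) ψ ∧
      (∀ x y, G.Adj x y → ψ x y ≤ c x y) ∧
      (∀ x y, G.Adj x y → ∃ m : ℤ, ψ x y = (m : ℝ)) := by
  obtain ⟨φ, hφ, hφc⟩ := hflow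
  obtain ⟨Ψ, hΨbox, hΨ⟩ := (isCompact_roundings φ).inter_iInter_nonempty (G.intFlowsAt f)
    (G.isClosed_intFlowsAt f) (G.roundings_inter_biInter_intFlowsAt_nonempty f hφ)
  have hΨ : ∀ x, Ψ ∈ G.intFlowsAt f x := Set.mem_iInter.mp hΨ
  refine ⟨fun x y => Ψ x y, ⟨fun x y hxy => ?_, fun x => ?_⟩, fun x y hxy => ?_,
    fun x y _ => ⟨Ψ x y, rfl⟩⟩
  all_goals dsimp only
  · exact_mod_cast (hΨ x).1 y ((G.mem_neighborFinset x y).mpr hxy)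
  · exact_mod_cast (hΨ x).2
  · obtain ⟨m, hm⟩ := hcint x y hxy
    have hceil : ⌈φ x y⌉ ≤ m := Int.ceil_le.mpr (hm ▸ hφc x y hxy)
    rw [hm]
    exact_mod_cast ((hΨbox x trivial y trivial).2.trans hceil)

/-- **The integral flow theorem.** If `G` is a locally finite graph, `c` is an
integer-valued capacity function and `f` is integer valued, then the existence of an
`f`-flow bounded by `c` implies the existence of an integral `f`-flow bounded by `c`. -/
theorem integral_flow_theorem {X : Type*} (G : SimpleGraph X) [G.LocallyFinite]
    (c : X → X → ℝ) (hc : ∀ x y, G.Adj x y → 0 ≤ c x y)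
    (hcint : ∀ x y, G.Adj x y → ∃ m : ℤ, c x y = (m : ℝ))
    (f : X → ℤ)
    (hflow : ∃ φ : X → X → ℝ, IsFlow G (fun x => (f x : ℝ)) φ ∧
      ∀ x y, G.Adj x y → φ x y ≤ c x y) :
    ∃ ψ : X → X → ℝ, IsFlow G (fun x => (f x : ℝ)) ψ ∧
      (∀ x y, G.Adj x y → ψ x y ≤ c x y) ∧
      (∀ x y, G.Adj x y → ∃ m : ℤ, ψ x y = (m : ℝ)) :=
  integral_flow_theorem_general G c hcint f hflow
end

section
/- Suppose G is a locally finite graph on vertex set X and f : X → ℤ takes integer values. If φ is an f-flow on G, then there is an integral f-flow ψ on G such that |φ(x,y) − ψ(x,y)| < 1 for every edge (x,y) of G. -/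
/-!
For a finite set `S` of vertices, the functions `ψ` with `⌊φ⌋ ≤ ψ ≤ ⌈φ⌉` that are antisymmetric on
edges and conserve `f` at the vertices of `S` form a compact set containing `φ`, so by Krein–Milman
it has an extreme point. At an extreme point every edge at `S` carries an integer: otherwise no
vertex of `S` lies on exactly one non-integral edge (the flow out of it is an integer), so the
non-integral edges touching `S` outnumber the independent conservation constraints on them, and a
nonzero circulation supported on them could be added to `ψ` with either sign. These sets of
`S`-flows that are integral at `S` shrink as `S` grows; by compactness they have a common point,
which is the required flow.
-/

open Finset

theorem Int.abs_sub_lt_one_of_floor_le_of_le_ceil {R : Type*} [Ring R] [LinearOrder R]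
    [IsStrictOrderedRing R] [FloorRing R] {a b : R} (h₁ : (⌊a⌋ : R) ≤ b) (h₂ : b ≤ ⌈a⌉) :
    |a - b| < 1 :=
  abs_sub_lt_iff.2 ⟨sub_lt_iff_lt_add'.2 ((Int.lt_floor_add_one a).trans_le (by gcongr)),
    sub_lt_iff_lt_add'.2 (h₂.trans_lt (Int.ceil_lt_add_one a))⟩

theorem AddSubgroup.exists_ne_notMem_of_sum_mem {ι M : Type*} [DecidableEq ι] [AddCommGroup M]
    {H : AddSubgroup M} {s : Finset ι} {g : ι → M} (hs : ∑ i ∈ s, g i ∈ H) {j : ι} (hj : j ∈ s)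
    (hgj : g j ∉ H) : ∃ k ∈ s, k ≠ j ∧ g k ∉ H := by
  by_contra! h
  refine hgj ?_
  rw [← add_sum_erase _ _ hj] at hs
  have hrest : ∑ i ∈ s.erase j, g i ∈ H :=
    sum_mem fun i hi => h i (mem_of_mem_erase hi) (ne_of_mem_erase hi)
  simpa using H.sub_mem hs hrest

theorem Finset.two_mul_card_image_le {α β : Type*} [DecidableEq β] {s : Finset α} {f : α → β}
    (h : ∀ a ∈ s, ∃ b ∈ s, f b = f a ∧ b ≠ a) : 2 * #(s.image f) ≤ #s := by
  rw [card_eq_sum_card_fiberwise fun a ha => mem_image_of_mem f ha, mul_comm, ← smul_eq_mul]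
  refine card_nsmul_le_sum _ _ _ fun y hy => ?_
  obtain ⟨a, ha, rfl⟩ := mem_image.1 hy
  obtain ⟨b, hb, hba, hne⟩ := h a ha
  exact one_lt_card.2 ⟨b, mem_filter.2 ⟨hb, hba⟩, a, mem_filter.2 ⟨ha, rfl⟩, hne⟩

theorem Finset.card_eq_two_mul_card_filter_lt {α : Type*} [LinearOrder α] {B : Finset (α × α)}
    (hirr : ∀ p ∈ B, p.1 ≠ p.2) (hswap : ∀ p ∈ B, p.swap ∈ B) :
    #B = 2 * #(B.filter fun p => p.1 < p.2) := by
  rw [← card_filter_add_card_filter_not (fun p : α × α => p.1 < p.2), two_mul, add_right_inj]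
  refine card_nbij' Prod.swap Prod.swap ?_ ?_ (fun _ _ => rfl) (fun _ _ => rfl)
  · intro p hp
    simp only [mem_coe, mem_filter, not_lt] at hp ⊢
    exact ⟨hswap p hp.1, lt_of_le_of_ne hp.2 (hirr p hp.1).symm⟩
  · intro p hp
    simp only [mem_coe, mem_filter, not_lt] at hp ⊢
    exact ⟨hswap p hp.1, hp.2.le⟩

def unitFlow {X : Type*} [DecidableEq X] (p : X × X) (x y : X) : ℝ :=
  (if (x, y) = p then 1 else 0) - if (y, x) = p then 1 else 0

theorem unitFlow_antisymm {X : Type*} [DecidableEq X] (p : X × X) (x y : X) :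
    unitFlow p x y = -unitFlow p y x := by
  simp only [unitFlow]
  ring

namespace SimpleGraph

variable {X : Type*} (G : SimpleGraph X) [G.LocallyFinite]

def divergence : (X → X → ℝ) →ₗ[ℝ] X → ℝ where
  toFun ψ x := ∑ y ∈ G.neighborFinset x, ψ x y
  map_add' ψ χ := by ext x; simp [Finset.sum_add_distrib]
  map_smul' c ψ := by ext x; simp [Finset.mul_sum]

theorem divergence_apply (ψ : X → X → ℝ) (x : X) :
    G.divergence ψ x = ∑ y ∈ G.neighborFinset x, ψ x y := rfl

def boxFlows (S : Finset X) (f : X → ℤ) (φ : X → X → ℝ) : Set (X → X → ℝ) :=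
  {ψ | (∀ x y, ψ x y ∈ Set.Icc (⌊φ x y⌋ : ℝ) ⌈φ x y⌉) ∧ (∀ x y, G.Adj x y → ψ x y = -ψ y x) ∧
    ∀ x ∈ S, G.divergence ψ x = f x}

def roundedFlows (S : Finset X) (f : X → ℤ) (φ : X → X → ℝ) : Set (X → X → ℝ) :=
  G.boxFlows S f φ ∩ {ψ | ∀ x ∈ S, ∀ y, G.Adj x y → ψ x y ∈ (Int.castAddHom ℝ).range}

variable {G}

theorem sum_divergence_eq_zero {T : Finset X} {v : X → X → ℝ} (hanti : ∀ x y, v x y = -v y x)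
    (hsupp : ∀ x y, v x y ≠ 0 → G.Adj x y ∧ x ∈ T ∧ y ∈ T) :
    ∑ s ∈ T, G.divergence v s = 0 := by
  classical
  have hrestrict (s : X) (hs : s ∈ T) : G.divergence v s = ∑ y ∈ T, v s y := by
    rw [divergence_apply, ← sum_subset (inter_subset_left (s₂ := T)),
      sum_subset (inter_subset_right (s₁ := G.neighborFinset s))]
    · intro y hy hyN
      by_contra h
      exact hyN (mem_inter.2 ⟨(G.mem_neighborFinset _ _).2 (hsupp s y h).1, hy⟩)
    · intro y hy hyT
      by_contra h
      exact hyT (mem_inter.2 ⟨hy, (hsupp s y h).2.2⟩)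
  rw [sum_congr rfl hrestrict]
  have hswap : ∑ s ∈ T, ∑ y ∈ T, v s y = -∑ s ∈ T, ∑ y ∈ T, v s y := by
    conv_lhs => rw [sum_comm]
    rw [← sum_neg_distrib]
    refine sum_congr rfl fun y _ => ?_
    rw [← sum_neg_distrib]
    exact sum_congr rfl fun s _ => hanti s y
  linarith

theorem divergence_eq_zero_of_forall_mem_erase [DecidableEq X] {T : Finset X} {v : X → X → ℝ}
    (hanti : ∀ x y, v x y = -v y x) (hsupp : ∀ x y, v x y ≠ 0 → G.Adj x y ∧ x ∈ T ∧ y ∈ T)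
    {s₀ : X} (h : ∀ s ∈ T.erase s₀, G.divergence v s = 0) {s : X} (hs : s ∈ T) :
    G.divergence v s = 0 := by
  obtain rfl | hne := eq_or_ne s s₀
  · have htotal := sum_divergence_eq_zero hanti hsupp
    rwa [← add_sum_erase _ _ hs, sum_eq_zero h, add_zero] at htotal
  · exact h s (mem_erase.2 ⟨hne, hs⟩)

theorem exists_circulation_of_card_lt {D : Finset (X × X)} (hD : ∀ p ∈ D, p.swap ∉ D)
    {I : Finset X} (hI : #I < #D) :
    ∃ v : X → X → ℝ, v ≠ 0 ∧ (∀ x y, v x y = -v y x) ∧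
      (∀ x y, v x y ≠ 0 → (x, y) ∈ D ∨ (y, x) ∈ D) ∧ ∀ s ∈ I, G.divergence v s = 0 := by
  classical
  let w : D → I → ℝ := fun p s => G.divergence (unitFlow p) s
  have hdep : ¬ LinearIndependent ℝ w := fun h => by
    have := h.fintype_card_le_finrank
    simp only [Module.finrank_fintype_fun_eq_card, Fintype.card_coe] at this
    omega
  obtain ⟨g, hg, p₀, hp₀⟩ := Fintype.not_linearIndependent_iff.1 hdep
  refine ⟨fun x y => ∑ p : D, g p * unitFlow p x y, fun h => hp₀ ?_, ?_, ?_, ?_⟩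
  · have hunit (p : D) : unitFlow p p₀.1.1 p₀.1.2 = if p = p₀ then 1 else 0 := by
      have hswap : (p₀.1.2, p₀.1.1) ≠ (p : X × X) :=
        fun h => hD _ p₀.2 (by rw [Prod.swap, h]; exact p.2)
      by_cases hp : p = p₀
      · subst hp
        simp [unitFlow, hswap]
      · simp [unitFlow, hswap, hp, Ne.symm (Subtype.coe_ne_coe.2 hp)]
    simpa [hunit] using congrFun (congrFun h p₀.1.1) p₀.1.2
  · intro x y
    rw [← sum_neg_distrib]
    exact sum_congr rfl fun p _ => by rw [unitFlow_antisymm p x y]; ring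
  · intro x y h
    obtain ⟨p, -, hp⟩ := exists_ne_zero_of_sum_ne_zero h
    by_contra hxy
    push Not at hxy
    apply hp
    have h1 : (x, y) ≠ p := fun h => hxy.1 (h ▸ p.2)
    have h2 : (y, x) ≠ p := fun h => hxy.2 (h ▸ p.2)
    simp [unitFlow, h1, h2]
  · intro s hs
    have := congrFun hg ⟨s, hs⟩
    simp only [Finset.sum_apply, Pi.smul_apply, smul_eq_mul, Pi.zero_apply, w] at this
    rw [← this, divergence_apply, sum_comm]
    simp only [divergence_apply, mul_sum]

theorem exists_circulation_of_degree_ne_one {S : Finset X} {B : Finset (X × X)} (hB : B.Nonempty)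
    (hadj : ∀ p ∈ B, G.Adj p.1 p.2) (hswap : ∀ p ∈ B, p.swap ∈ B)
    (hdeg : ∀ p ∈ B, p.1 ∈ S → ∃ q ∈ B, q.1 = p.1 ∧ q ≠ p) :
    ∃ v : X → X → ℝ, v ≠ 0 ∧ (∀ x y, v x y = -v y x) ∧ (∀ x y, v x y ≠ 0 → (x, y) ∈ B) ∧
      ∀ s ∈ S, G.divergence v s = 0 := by
  classical
  let : LinearOrder X := linearOrderOfSTO WellOrderingRel
  set F := B.filter fun p => p.1 ∈ S
  set S' := F.image Prod.fst
  set D := B.filter fun p => p.1 < p.2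
  have hS' : 2 * #S' ≤ #F := two_mul_card_image_le fun p hp => by
    obtain ⟨hpB, hpS⟩ := mem_filter.1 hp
    obtain ⟨q, hqB, hqp, hne⟩ := hdeg p hpB hpS
    exact ⟨q, mem_filter.2 ⟨hqB, hqp ▸ hpS⟩, hqp, hne⟩
  have hBD : #B = 2 * #D := card_eq_two_mul_card_filter_lt (fun p hp => (hadj p hp).ne) hswap
  -- `2 #S' ≤ #F ≤ #B = 2 #D`, strictly if some pair of `B` leaves `S`. Otherwise `B` lies inside
  -- `S'`, where the divergences of a circulation sum to zero, so one constraint at `S'` may go.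
  obtain ⟨I, hID, hIS'⟩ : ∃ I : Finset X, #I < #D ∧ ∀ v : X → X → ℝ,
      (∀ x y, v x y = -v y x) → (∀ x y, v x y ≠ 0 → (x, y) ∈ B) →
      (∀ s ∈ I, G.divergence v s = 0) → ∀ s ∈ S', G.divergence v s = 0 := by
    by_cases hout : ∃ p ∈ B, p.1 ∉ S
    · refine ⟨S', ?_, fun v _ _ h => h⟩
      have : #F < #B := card_lt_card (filter_ssubset.2 hout)
      omega
    · push Not at hout
      have hFB : F = B := filter_true_of_mem hout
      obtain ⟨s₀, hs₀⟩ : S'.Nonempty := (hFB ▸ hB).image _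
      refine ⟨S'.erase s₀, ?_, fun v hanti hsupp h s hs => ?_⟩
      · have := card_erase_lt_of_mem hs₀
        rw [hFB] at hS'
        omega
      have hmem : ∀ p ∈ B, p.1 ∈ S' := fun p hp => mem_image_of_mem _ (hFB ▸ hp)
      refine divergence_eq_zero_of_forall_mem_erase hanti (fun x y hxy => ?_) h hs
      exact ⟨hadj _ (hsupp x y hxy), hmem _ (hsupp x y hxy), hmem _ (hswap _ (hsupp x y hxy))⟩
  obtain ⟨v, hv, hanti, hsuppD, hdiv⟩ := exists_circulation_of_card_lt (G := G) (D := D)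
    (fun p hp hswapD => (mem_filter.1 hp).2.asymm (mem_filter.1 hswapD).2) hID
  have hsupp : ∀ x y, v x y ≠ 0 → (x, y) ∈ B := fun x y hxy =>
    (hsuppD x y hxy).elim (fun h => (mem_filter.1 h).1) fun h => hswap _ (mem_filter.1 h).1
  refine ⟨v, hv, hanti, hsupp, fun s hs => ?_⟩
  by_cases hsS' : s ∈ S'
  · exact hIS' v hanti hsupp hdiv s hsS'
  · refine sum_eq_zero fun y _ => by_contra fun h => hsS' ?_
    exact mem_image.2 ⟨(s, y), mem_filter.2 ⟨hsupp s y h, hs⟩, rfl⟩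

theorem isCompact_boxFlows (S : Finset X) (f : X → ℤ) (φ : X → X → ℝ) :
    IsCompact (G.boxFlows S f φ) := by
  refine (isCompact_univ_pi fun x => isCompact_univ_pi fun y => isCompact_Icc).of_isClosed_subset
    ?_ fun ψ hψ => Set.mem_univ_pi.2 fun x => Set.mem_univ_pi.2 (hψ.1 x)
  simp only [boxFlows, Set.ofPred_and, Set.ofPred_forall, divergence_apply]
  refine (isClosed_iInter fun x => isClosed_iInter fun y => isClosed_Icc.preimage ?_).inter
    ((isClosed_iInter fun x => isClosed_iInter fun y => isClosed_iInter fun _ =>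
      isClosed_eq ?_ ?_).inter
    (isClosed_iInter fun x => isClosed_iInter fun _ => isClosed_eq ?_ continuous_const)) <;>
  fun_prop

theorem exists_circulation_of_notMem_range {S : Finset X} {f : X → ℤ} {ψ : X → X → ℝ}
    (hanti : ∀ x y, G.Adj x y → ψ x y = -ψ y x) (hdiv : ∀ x ∈ S, G.divergence ψ x = f x)
    {x y : X} (hx : x ∈ S) (hxy : G.Adj x y) (hψxy : ψ x y ∉ (Int.castAddHom ℝ).range) :
    ∃ B : Finset (X × X), (∀ p ∈ B, ψ p.1 p.2 ∉ (Int.castAddHom ℝ).range) ∧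
      ∃ v : X → X → ℝ, v ≠ 0 ∧ (∀ x y, v x y = -v y x) ∧ (∀ x y, v x y ≠ 0 → (x, y) ∈ B) ∧
        ∀ s ∈ S, G.divergence v s = 0 := by
  classical
  set T := S ∪ S.biUnion fun s => G.neighborFinset s
  set B := (T ×ˢ T).filter fun p =>
    G.Adj p.1 p.2 ∧ (p.1 ∈ S ∨ p.2 ∈ S) ∧ ψ p.1 p.2 ∉ (Int.castAddHom ℝ).range
  have hmemB (p : X × X) : p ∈ B ↔
      G.Adj p.1 p.2 ∧ (p.1 ∈ S ∨ p.2 ∈ S) ∧ ψ p.1 p.2 ∉ (Int.castAddHom ℝ).range := by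
    have hT {a b : X} (hab : G.Adj a b) (ha : a ∈ S) : a ∈ T ∧ b ∈ T :=
      ⟨mem_union_left _ ha,
        mem_union_right _ (mem_biUnion.2 ⟨a, ha, (G.mem_neighborFinset _ _).2 hab⟩)⟩
    simp only [B, mem_filter, mem_product, and_iff_right_iff_imp]
    rintro ⟨hadj, ha | hb, -⟩
    · exact hT hadj ha
    · exact (hT hadj.symm hb).symm
  have hswap : ∀ p ∈ B, p.swap ∈ B := by
    intro p hp
    obtain ⟨hadj, hS, hint⟩ := (hmemB p).1 hp
    refine (hmemB _).2 ⟨hadj.symm, hS.symm, ?_⟩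
    rwa [Prod.fst_swap, Prod.snd_swap, hanti _ _ hadj.symm, neg_mem_iff]
  have hdeg : ∀ p ∈ B, p.1 ∈ S → ∃ q ∈ B, q.1 = p.1 ∧ q ≠ p := by
    intro p hp hpS
    obtain ⟨hadj, -, hint⟩ := (hmemB p).1 hp
    have hsum : ∑ z ∈ G.neighborFinset p.1, ψ p.1 z ∈ (Int.castAddHom ℝ).range :=
      ⟨f p.1, (hdiv p.1 hpS).symm⟩
    obtain ⟨z, hz, hzp, hzint⟩ := AddSubgroup.exists_ne_notMem_of_sum_mem hsum
      ((G.mem_neighborFinset _ _).2 hadj) hint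
    exact ⟨(p.1, z), (hmemB _).2 ⟨(G.mem_neighborFinset _ _).1 hz, Or.inl hpS, hzint⟩, rfl,
      fun h => hzp (congrArg Prod.snd h)⟩
  exact ⟨B, fun p hp => ((hmemB p).1 hp).2.2, exists_circulation_of_degree_ne_one
    ⟨(x, y), (hmemB _).2 ⟨hxy, Or.inl hx, hψxy⟩⟩ (fun p hp => ((hmemB p).1 hp).1) hswap hdeg⟩

open Filter Topology in
theorem eventually_add_smul_mem_boxFlows {S : Finset X} {f : X → ℤ} {φ ψ v : X → X → ℝ}
    (hψ : ψ ∈ G.boxFlows S f φ) {B : Finset (X × X)}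
    (hB : ∀ p ∈ B, ψ p.1 p.2 ∉ (Int.castAddHom ℝ).range) (hvanti : ∀ x y, v x y = -v y x)
    (hvsupp : ∀ x y, v x y ≠ 0 → (x, y) ∈ B) (hvdiv : ∀ s ∈ S, G.divergence v s = 0) :
    ∀ᶠ ε in 𝓝 (0 : ℝ), ψ + ε • v ∈ G.boxFlows S f φ := by
  obtain ⟨hbox, hanti, hdiv⟩ := hψ
  have hinterior : ∀ p ∈ B, ψ p.1 p.2 ∈ Set.Ioo (⌊φ p.1 p.2⌋ : ℝ) ⌈φ p.1 p.2⌉ := fun p hp =>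
    ⟨(hbox _ _).1.lt_of_ne fun h => hB p hp ⟨_, h⟩,
      (hbox _ _).2.lt_of_ne fun h => hB p hp ⟨_, h.symm⟩⟩
  have hnear : ∀ᶠ ε in 𝓝 (0 : ℝ), ∀ p ∈ B,
      ψ p.1 p.2 + ε * v p.1 p.2 ∈ Set.Ioo (⌊φ p.1 p.2⌋ : ℝ) ⌈φ p.1 p.2⌉ :=
    (eventually_all_finset B).2 fun p hp =>
      (Continuous.tendsto' (by fun_prop) 0 _ (by simp)).eventually
        (isOpen_Ioo.mem_nhds (hinterior p hp))
  filter_upwards [hnear] with ε hε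
  refine ⟨fun a b => ?_, fun a b hab => ?_, fun a ha => ?_⟩
  · by_cases hab : v a b = 0
    · simpa [hab] using hbox a b
    · exact Set.Ioo_subset_Icc_self (hε (a, b) (hvsupp a b hab))
  · simp only [Pi.add_apply, Pi.smul_apply, smul_eq_mul]
    rw [hanti a b hab, hvanti a b]
    ring
  · rw [map_add, map_smul, Pi.add_apply, Pi.smul_apply, hdiv a ha, hvdiv a ha, smul_zero,
      add_zero]

open Filter Topology in
theorem integral_of_mem_extremePoints_boxFlows {S : Finset X} {f : X → ℤ} {φ ψ : X → X → ℝ}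
    (hψ : ψ ∈ (G.boxFlows S f φ).extremePoints ℝ) {x y : X} (hx : x ∈ S) (hxy : G.Adj x y) :
    ψ x y ∈ (Int.castAddHom ℝ).range := by
  obtain ⟨hψmem, hext⟩ := mem_extremePoints.1 hψ
  by_contra hψxy
  obtain ⟨B, hB, v, hv, hvanti, hvsupp, hvdiv⟩ :=
    exists_circulation_of_notMem_range hψmem.2.1 hψmem.2.2 hx hxy hψxy
  have hsmall := eventually_add_smul_mem_boxFlows hψmem hB hvanti hvsupp hvdiv
  have hsmall' := hsmall.and ((continuous_neg.tendsto' 0 0 neg_zero).eventually hsmall)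
  obtain ⟨ε, ⟨hplus, hminus⟩, hε⟩ :=
    ((hsmall'.filter_mono nhdsWithin_le_nhds).and self_mem_nhdsWithin).exists (f := 𝓝[≠] 0)
  have := hext _ hplus _ (by simpa [sub_eq_add_neg] using hminus)
    (mem_openSegment_add_sub ψ (ε • v))
  exact hv (smul_right_injective _ hε (by simpa using this.1))

theorem isClosed_roundedFlows (S : Finset X) (f : X → ℤ) (φ : X → X → ℝ) :
    IsClosed (G.roundedFlows S f φ) := by
  refine (isCompact_boxFlows S f φ).isClosed.inter ?_
  have hℤ : IsClosed ((Int.castAddHom ℝ).range : Set ℝ) := by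
    rw [AddMonoidHom.coe_range, Int.coe_castAddHom]
    exact Real.isClosed_range_intCast
  simp only [Set.ofPred_forall]
  exact isClosed_biInter fun x _ => isClosed_iInter fun y => isClosed_iInter fun _ =>
    hℤ.preimage (by fun_prop)

theorem roundedFlows_antitone (f : X → ℤ) (φ : X → X → ℝ) :
    Antitone (G.roundedFlows · f φ) :=
  fun _ _ hST _ ⟨⟨hbox, hanti, hdiv⟩, hint⟩ =>
    ⟨⟨hbox, hanti, fun x hx => hdiv x (hST hx)⟩, fun x hx => hint x (hST hx)⟩

theorem roundedFlows_nonempty {S : Finset X} {f : X → ℤ} {φ : X → X → ℝ}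
    (hφ : φ ∈ G.boxFlows S f φ) : (G.roundedFlows S f φ).Nonempty := by
  obtain ⟨ψ, hψ⟩ := (isCompact_boxFlows S f φ).extremePoints_nonempty ⟨φ, hφ⟩
  exact ⟨ψ, hψ.1, fun x hx y hxy => integral_of_mem_extremePoints_boxFlows hψ hx hxy⟩

end SimpleGraph

open SimpleGraph

/-- **Rounding flows.** If `G` is a locally finite graph, `f` is integer valued, and `φ`
is an `f`-flow, then there is an integral `f`-flow `ψ` with `|φ(x,y) − ψ(x,y)| < 1` on
every edge. -/
theorem integral_flow_rounding {X : Type*} (G : SimpleGraph X) [G.LocallyFinite]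
    (f : X → ℤ) (φ : X → X → ℝ) (hφ : IsFlow G (fun x => (f x : ℝ)) φ) :
    ∃ ψ : X → X → ℝ, IsFlow G (fun x => (f x : ℝ)) ψ ∧
      (∀ x y, G.Adj x y → ∃ m : ℤ, ψ x y = (m : ℝ)) ∧
      (∀ x y, G.Adj x y → |φ x y - ψ x y| < 1) := by
  have hφS (S : Finset X) : φ ∈ G.boxFlows S f φ :=
    ⟨fun x y => ⟨Int.floor_le _, Int.le_ceil _⟩, hφ.1, fun x _ => hφ.2 x⟩
  obtain ⟨ψ, hψ⟩ := IsCompact.nonempty_iInter_of_directed_nonempty_isCompact_isClosed _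
    (roundedFlows_antitone f φ).directed_ge (fun S => roundedFlows_nonempty (hφS S))
    (fun S => (isCompact_boxFlows S f φ).of_isClosed_subset (isClosed_roundedFlows S f φ)
      Set.inter_subset_left)
    (isClosed_roundedFlows · f φ)
  have hψS (S : Finset X) : ψ ∈ G.roundedFlows S f φ := Set.mem_iInter.1 hψ S
  obtain ⟨⟨hbox, hanti, -⟩, -⟩ := hψS ∅
  refine ⟨ψ, ⟨hanti, fun x => (hψS {x}).1.2.2 x (mem_singleton_self x)⟩, fun x y hxy => ?_,
    fun x y _ => Int.abs_sub_lt_one_of_floor_le_of_le_ceil (hbox x y).1 (hbox x y).2⟩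
  obtain ⟨m, hm⟩ := (hψS {x}).2 x (mem_singleton_self x) y hxy
  exact ⟨m, hm.symm⟩
end

section
/- There exist a 2-regular acyclic Borel graph G on a standard Borel space X and a Borel function f : X → ℤ such that G has a Borel f-flow but G has no integral Borel f-flow. -/
open Finset

/-- An `f`-flow on a graph `G`: a function on oriented edges, antisymmetric on edges,
whose net outflow at each vertex with finitely many neighbors equals `f` there. -/
def IsFlowS {X : Type*} (G : SimpleGraph X) (f : X → ℝ) (φ : X → X → ℝ) : Prop :=
  (∀ x y, G.Adj x y → φ x y = -φ y x) ∧
  (∀ (x : X) (hfin : (G.neighborSet x).Finite), ∑ y ∈ hfin.toFinset, φ x y = f x)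

/-- The content of Statement 10, for a fixed measurable space `X`: there is a 2-regular
acyclic Borel graph `G` on the standard Borel space `X` and a Borel `f : X → ℤ` such that
`G` has a Borel `f`-flow but no integral Borel `f`-flow (Borel-ness of a flow means it is
Borel as a function on the Borel edge set). -/
def HasLaczkovichExample (X : Type) [MeasurableSpace X] : Prop :=
  StandardBorelSpace X ∧
  ∃ (G : SimpleGraph X) (f : X → ℤ),
    MeasurableSet {p : X × X | G.Adj p.1 p.2} ∧
    (∀ x : X, (G.neighborSet x).ncard = 2) ∧
    G.IsAcyclic ∧
    Measurable f ∧
    (∃ φ : X → X → ℝ,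
      Measurable (fun p : {p : X × X // G.Adj p.1 p.2} => φ p.val.1 p.val.2) ∧
      IsFlowS G (fun x => (f x : ℝ)) φ) ∧
    ¬(∃ ψ : X → X → ℝ,
      Measurable (fun p : {p : X × X // G.Adj p.1 p.2} => ψ p.val.1 p.val.2) ∧
      IsFlowS G (fun x => (f x : ℝ)) ψ ∧
      ∀ x y, G.Adj x y → ∃ m : ℤ, ψ x y = (m : ℝ))

/-!
Let the infinite dihedral group act on the circle `ℝ/ℤ`, with the reflections `σ₀ : z ↦ -z` and
`σ₁ : z ↦ -(√2 + z)` as generators, and let `X` be the co-countable set of points with trivial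
stabilizer. On `X` the Schreier graph of `σ₀, σ₁` is a Borel union of bi-infinite lines. Choosing
Borel transversals `E₀`, `E₁` of the two reflections, sending `±1/2` along the `σ₁`-edge at `x`
according to whether `x ∈ E₁`, and correcting along the `σ₀`-edges gives a Borel flow whose
demand `f` is integral.

If `ψ` were an integral Borel `f`-flow, its difference with this flow would be a circulation whose
value `d x` on the `σ₁`-edge at `x` is a Borel function, nowhere zero (an integer minus a half
integer), changing sign under both reflections. Then `{d > 0}` is invariant under the rotation
`σ₀σ₁ : z ↦ z + √2` and is mapped onto its complement by `z ↦ -z`, which contradicts the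
ergodicity of the irrational rotation.
-/

open DihedralGroup

notation "σ₀" => (sr 0 : DihedralGroup 0)
notation "σ₁" => (sr 1 : DihedralGroup 0)

namespace DihedralGroup

lemma sr_smul_sr_smul {X : Type*} [MulAction (DihedralGroup 0) X] (i : ZMod 0) (x : X) :
    sr i • sr i • x = x := by
  rw [smul_smul, sr_mul_self, one_smul]

private lemma prod_cons_eq_of_isChain_ne :
    ∀ (l : List (DihedralGroup 0)) (g : DihedralGroup 0),
      (∀ h ∈ g :: l, h = σ₀ ∨ h = σ₁) → (g :: l).IsChain (· ≠ ·) →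
      (g = σ₀ → ∃ k : ℕ, (g :: l).prod = r ((k : ZMod 0) + 1) ∨
        (g :: l).prod = sr (-(k : ZMod 0))) ∧
      (g = σ₁ → ∃ k : ℕ, (g :: l).prod = r (-((k : ZMod 0) + 1)) ∨
        (g :: l).prod = sr ((k : ZMod 0) + 1))
  | [], g, _, _ => ⟨fun hg => ⟨0, by simp [hg]⟩, fun hg => ⟨0, by simp [hg]⟩⟩
  | g' :: l, g, hgen, hchain => by
    obtain ⟨hne, hchain'⟩ := List.isChain_cons_cons.mp hchain
    obtain ⟨ih₀, ih₁⟩ :=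
      prod_cons_eq_of_isChain_ne l g' (fun h hh => hgen h (List.mem_cons_of_mem _ hh)) hchain'
    rw [List.prod_cons]
    refine ⟨fun hg => ?_, fun hg => ?_⟩ <;> subst hg
    · obtain ⟨k, hk | hk⟩ := ih₁ ((hgen g' (by simp)).resolve_left hne.symm) <;> rw [hk]
      · exact ⟨k + 1, .inr (by rw [sr_mul_r]; push_cast; ring_nf)⟩
      · exact ⟨k, .inl (by rw [sr_mul_sr]; ring_nf)⟩
    · obtain ⟨k, hk | hk⟩ := ih₀ ((hgen g' (by simp)).resolve_right hne.symm) <;> rw [hk]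
      · exact ⟨k + 1, .inr (by rw [sr_mul_r]; push_cast; ring_nf)⟩
      · exact ⟨k, .inl (by rw [sr_mul_sr]; ring_nf)⟩

theorem prod_ne_one_of_isChain_ne {l : List (DihedralGroup 0)}
    (hgen : ∀ g ∈ l, g = σ₀ ∨ g = σ₁) (hl : l.IsChain (· ≠ ·)) (hne : l ≠ []) :
    l.prod ≠ 1 := by
  obtain ⟨g, l, rfl⟩ := List.exists_cons_of_ne_nil hne
  have key := prod_cons_eq_of_isChain_ne l g hgen hl
  rw [one_def]
  rcases hgen g (by simp) with rfl | rfl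
  · obtain ⟨k, hk | hk⟩ := key.1 rfl <;> rw [hk] <;>
      simp only [ne_eq, r.injEq, reduceCtorEq, not_false_eq_true]
    exact_mod_cast Nat.succ_ne_zero k
  · obtain ⟨k, hk | hk⟩ := key.2 rfl <;> rw [hk] <;>
      simp only [ne_eq, r.injEq, reduceCtorEq, not_false_eq_true, neg_eq_zero]
    exact_mod_cast Nat.succ_ne_zero k

end DihedralGroup

def freePoints (G Y : Type*) [Group G] [MulAction G Y] : SubMulAction G Y where
  carrier := {y | ∀ g : G, g • y = y → g = 1}
  smul_mem' g y hy h hh := by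
    have := hy (g⁻¹ * h * g) (by rw [mul_smul, mul_smul, hh, inv_smul_smul])
    rwa [mul_assoc, inv_mul_eq_one, eq_comm, mul_eq_right] at this

lemma mem_freePoints {G Y : Type*} [Group G] [MulAction G Y] {y : Y} :
    y ∈ freePoints G Y ↔ ∀ g : G, g • y = y → g = 1 :=
  Iff.rfl

lemma freePoints.eq_one_of_smul_eq {G Y : Type*} [Group G] [MulAction G Y] (g : G)
    (x : freePoints G Y) (h : g • x = x) : g = 1 :=
  x.2 g (congrArg Subtype.val h)

theorem IsFlowS.sub {X : Type*} {G : SimpleGraph X} {f : X → ℝ} {φ ψ : X → X → ℝ}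
    (hψ : IsFlowS G f ψ) (hφ : IsFlowS G f φ) : IsFlowS G 0 (ψ - φ) := by
  refine ⟨fun x y h => ?_, fun x hfin => ?_⟩
  · simp only [Pi.sub_apply, hψ.1 x y h, hφ.1 x y h]
    ring
  · simp [Finset.sum_sub_distrib, hψ.2 x hfin, hφ.2 x hfin]

def dihedralGraph (X : Type*) [MulAction (DihedralGroup 0) X] : SimpleGraph X :=
  SimpleGraph.fromRel fun x y => y = σ₀ • x ∨ y = σ₁ • x

namespace dihedralGraph

variable {X : Type*} [MulAction (DihedralGroup 0) X]

lemma adj_iff {x y : X} :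
    (dihedralGraph X).Adj x y ↔ x ≠ y ∧ (y = σ₀ • x ∨ y = σ₁ • x) := by
  rw [dihedralGraph, SimpleGraph.fromRel_adj]
  refine and_congr_right fun _ => ⟨?_, Or.inl⟩
  rintro (h | (rfl | rfl))
  · exact h
  · exact .inl (sr_smul_sr_smul 0 y).symm
  · exact .inr (sr_smul_sr_smul 1 y).symm

lemma measurableSet_adj [MeasurableSpace X] [MeasurableEq X]
    [MeasurableConstSMul (DihedralGroup 0) X] :
    MeasurableSet {p : X × X | (dihedralGraph X).Adj p.1 p.2} := by
  have hsr (g : DihedralGroup 0) : MeasurableSet {p : X × X | p.2 = g • p.1} :=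
    measurableSet_eq_fun measurable_snd ((measurable_const_smul g).comp measurable_fst)
  simp only [adj_iff, Set.ofPred_and, Set.ofPred_or]
  exact (measurableSet_eq_fun measurable_fst measurable_snd).compl.inter ((hsr _).union (hsr _))

open Classical in
noncomputable def dartLabel (d : (dihedralGraph X).Dart) : DihedralGroup 0 :=
  if d.snd = σ₁ • d.fst then σ₁ else σ₀

lemma dartLabel_eq_or (d : (dihedralGraph X).Dart) : dartLabel d = σ₀ ∨ dartLabel d = σ₁ := by
  unfold dartLabel; split_ifs <;> simp

lemma dartLabel_smul_dartLabel_smul (d : (dihedralGraph X).Dart) (x : X) :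
    dartLabel d • dartLabel d • x = x := by
  rcases dartLabel_eq_or d with h | h <;> rw [h, sr_smul_sr_smul]

lemma snd_eq_dartLabel_smul_fst (d : (dihedralGraph X).Dart) : d.snd = dartLabel d • d.fst := by
  have hadj := (adj_iff.mp d.adj).2
  unfold dartLabel
  split_ifs with h
  · exact h
  · exact hadj.resolve_right h

lemma dartLabel_ne_of_dartAdj {d d' : (dihedralGraph X).Dart}
    (hadj : (dihedralGraph X).DartAdj d d') (hedge : d.edge ≠ d'.edge) :
    dartLabel d ≠ dartLabel d' := by
  intro hlabel
  refine hedge ?_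
  have hback : d'.snd = d.fst := by
    rw [snd_eq_dartLabel_smul_fst d', ← hadj, snd_eq_dartLabel_smul_fst d, hlabel,
      dartLabel_smul_dartLabel_smul]
  rw [← SimpleGraph.Dart.edge_symm d']
  congr 1
  exact SimpleGraph.Dart.ext _ _ (Prod.ext hback.symm hadj)

lemma eq_prod_map_dartLabel_smul {x y : X} (p : (dihedralGraph X).Walk x y) :
    x = (p.darts.map dartLabel).prod • y := by
  induction p with
  | nil => simp
  | @cons x u y h p ih =>
    rw [SimpleGraph.Walk.darts_cons, List.map_cons, List.prod_cons, mul_smul, ← ih]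
    set d : (dihedralGraph X).Dart := ⟨(x, u), h⟩
    have hu : u = dartLabel d • x := snd_eq_dartLabel_smul_fst d
    conv_lhs => rw [← dartLabel_smul_dartLabel_smul d x]
    rw [← hu]

variable (hfree : ∀ (g : DihedralGroup 0) (x : X), g • x = x → g = 1)
include hfree

lemma sr_smul_ne (i : ZMod 0) (x : X) : sr i • x ≠ x := fun h => by
  have := hfree _ x h
  rw [one_def] at this
  cases this

lemma adj_iff_of_free {x y : X} : (dihedralGraph X).Adj x y ↔ y = σ₀ • x ∨ y = σ₁ • x := by
  rw [adj_iff]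
  refine ⟨And.right, fun h => ⟨?_, h⟩⟩
  rcases h with rfl | rfl <;> exact (sr_smul_ne hfree _ x).symm

lemma sr_zero_smul_ne_sr_one_smul (x : X) : σ₀ • x ≠ σ₁ • x := fun h => by
  have := hfree (σ₁ * σ₀) x (by rw [mul_smul, h, sr_smul_sr_smul])
  rw [sr_mul_sr, one_def, r.injEq] at this
  norm_num at this

lemma neighborSet_eq (x : X) : (dihedralGraph X).neighborSet x = {σ₀ • x, σ₁ • x} := by
  ext y
  simp [adj_iff_of_free hfree]

lemma ncard_neighborSet (x : X) : ((dihedralGraph X).neighborSet x).ncard = 2 := by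
  rw [neighborSet_eq hfree, Set.ncard_pair (sr_zero_smul_ne_sr_one_smul hfree x)]

/-- Consecutive darts of a cycle carry different reflections, and a nonempty alternating word in
`σ₀, σ₁` is not the identity, so it cannot fix a point of a free action. -/
theorem isAcyclic : (dihedralGraph X).IsAcyclic := by
  intro v c hc
  have hedges : c.darts.IsChain fun d d' => d.edge ≠ d'.edge :=
    (List.isChain_map _).mp hc.edges_nodup.isChain
  have halt : (c.darts.map dartLabel).IsChain (· ≠ ·) := by
    rw [List.isChain_map, List.isChain_iff_forall_rel_of_append_cons_cons]
    intro d d' l₁ l₂ hl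
    exact dartLabel_ne_of_dartAdj
      (List.isChain_iff_forall_rel_of_append_cons_cons.mp c.isChain_dartAdj_darts hl)
      (List.isChain_iff_forall_rel_of_append_cons_cons.mp hedges hl)
  have hne : c.darts.map dartLabel ≠ [] := by
    simpa [SimpleGraph.Walk.darts_eq_nil] using hc.not_nil
  refine prod_ne_one_of_isChain_ne (fun g hg => ?_) halt hne
    (hfree _ v (eq_prod_map_dartLabel_smul c).symm)
  obtain ⟨d, -, rfl⟩ := List.mem_map.mp hg
  exact dartLabel_eq_or d

lemma isFlowS_iff {f : X → ℝ} {φ : X → X → ℝ} :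
    IsFlowS (dihedralGraph X) f φ ↔ (∀ x y, (dihedralGraph X).Adj x y → φ x y = -φ y x) ∧
      ∀ x, φ x (σ₀ • x) + φ x (σ₁ • x) = f x := by
  have hsum : ∀ x (hfin : ((dihedralGraph X).neighborSet x).Finite),
      ∑ y ∈ hfin.toFinset, φ x y = φ x (σ₀ • x) + φ x (σ₁ • x) := by
    intro x hfin
    classical
    rw [show hfin.toFinset = {σ₀ • x, σ₁ • x} by ext; simp [neighborSet_eq hfree],
      Finset.sum_pair (sr_zero_smul_ne_sr_one_smul hfree x)]
  refine and_congr_right fun _ => ⟨fun h x => ?_, fun h x hfin => ?_⟩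
  · have hfin : ((dihedralGraph X).neighborSet x).Finite := by
      rw [neighborSet_eq hfree]; exact Set.toFinite _
    rw [← hsum x hfin, h x hfin]
  · rw [hsum, h]

lemma isFlowS_zero_apply_sr_smul {δ : X → X → ℝ} (hδ : IsFlowS (dihedralGraph X) 0 δ) (x : X) :
    δ (σ₀ • x) (σ₁ • σ₀ • x) = -δ x (σ₁ • x) ∧ δ (σ₁ • x) (σ₁ • σ₁ • x) = -δ x (σ₁ • x) := by
  obtain ⟨hanti, hcons⟩ := (isFlowS_iff hfree).mp hδ
  have hx := hcons x
  have hσ₀x := hcons (σ₀ • x)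
  have hedge := hanti x (σ₀ • x) ((adj_iff_of_free hfree).mpr (.inl rfl))
  rw [sr_smul_sr_smul] at hσ₀x
  refine ⟨by simp only [Pi.zero_apply] at hx hσ₀x; linarith, ?_⟩
  rw [sr_smul_sr_smul, hanti _ _ ((adj_iff_of_free hfree).mpr (.inr rfl)), neg_neg]

end dihedralGraph

section halfSign

variable {X : Type*} (E : Set X)

open Classical in
noncomputable def halfSign (x : X) : ℝ := if x ∈ E then 1 / 2 else -1 / 2

lemma halfSign_ne_intCast (x : X) (m : ℤ) : halfSign E x ≠ m := by
  intro h
  unfold halfSign at h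
  split_ifs at h
  · have : 2 * m = 1 := by exact_mod_cast (by linarith : (2 * m : ℝ) = 1)
    omega
  · have : 2 * m = -1 := by exact_mod_cast (by linarith : (2 * m : ℝ) = -1)
    omega

lemma intCast_floor_halfSign_add_halfSign (x y : X) :
    ((⌊halfSign E x + halfSign E y⌋ : ℤ) : ℝ) = halfSign E x + halfSign E y := by
  unfold halfSign; split_ifs <;> norm_num

lemma measurable_halfSign [MeasurableSpace X] {E : Set X} (hE : MeasurableSet E) :
    Measurable (halfSign E) :=
  Measurable.ite hE measurable_const measurable_const

end halfSign

namespace dihedralGraph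

variable {X : Type*} [MulAction (DihedralGroup 0) X] {E₀ E₁ : Set X}

open Classical in
noncomputable def demand (E₀ E₁ : Set X) (x : X) : ℤ :=
  if x ∈ E₀ then ⌊halfSign E₁ x + halfSign E₁ (σ₀ • x)⌋ else 0

open Classical in
noncomputable def halfFlow (E₀ E₁ : Set X) (x y : X) : ℝ :=
  if y = σ₁ • x then halfSign E₁ x else if y = σ₀ • x then demand E₀ E₁ x - halfSign E₁ x else 0

lemma demand_add_demand_sr_zero_smul (hE₀ : ∀ x, σ₀ • x ∈ E₀ ↔ x ∉ E₀) (x : X) :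
    (demand E₀ E₁ x + demand E₀ E₁ (σ₀ • x) : ℝ) = halfSign E₁ x + halfSign E₁ (σ₀ • x) := by
  unfold demand
  by_cases hx : x ∈ E₀
  · rw [if_pos hx, if_neg fun h => (hE₀ x).mp h hx, intCast_floor_halfSign_add_halfSign]
    simp
  · rw [if_neg hx, if_pos ((hE₀ x).mpr hx), sr_smul_sr_smul, intCast_floor_halfSign_add_halfSign]
    simp [add_comm]

lemma halfSign_sr_one_smul (hE₁ : ∀ x, σ₁ • x ∈ E₁ ↔ x ∉ E₁) (x : X) :
    halfSign E₁ (σ₁ • x) = -halfSign E₁ x := by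
  unfold halfSign
  by_cases hx : x ∈ E₁
  · rw [if_neg fun h => (hE₁ x).mp h hx, if_pos hx]; norm_num
  · rw [if_pos ((hE₁ x).mpr hx), if_neg hx]; norm_num

lemma halfFlow_sr_one_smul (x : X) : halfFlow E₀ E₁ x (σ₁ • x) = halfSign E₁ x := by
  rw [halfFlow, if_pos rfl]

lemma halfFlow_sr_zero_smul (hfree : ∀ (g : DihedralGroup 0) (x : X), g • x = x → g = 1)
    (x : X) : halfFlow E₀ E₁ x (σ₀ • x) = demand E₀ E₁ x - halfSign E₁ x := by
  rw [halfFlow, if_neg (sr_zero_smul_ne_sr_one_smul hfree x), if_pos rfl]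

theorem isFlowS_halfFlow (hfree : ∀ (g : DihedralGroup 0) (x : X), g • x = x → g = 1)
    (hE₀ : ∀ x, σ₀ • x ∈ E₀ ↔ x ∉ E₀) (hE₁ : ∀ x, σ₁ • x ∈ E₁ ↔ x ∉ E₁) :
    IsFlowS (dihedralGraph X) (fun x => (demand E₀ E₁ x : ℝ)) (halfFlow E₀ E₁) := by
  refine (isFlowS_iff hfree).mpr ⟨fun x y h => ?_, fun x => ?_⟩
  · rcases (adj_iff_of_free hfree).mp h with rfl | rfl
    · have hback := halfFlow_sr_zero_smul (E₀ := E₀) (E₁ := E₁) hfree (σ₀ • x)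
      rw [sr_smul_sr_smul] at hback
      rw [halfFlow_sr_zero_smul hfree, hback]
      linarith [demand_add_demand_sr_zero_smul (E₁ := E₁) hE₀ x]
    · have hback := halfFlow_sr_one_smul (E₀ := E₀) (E₁ := E₁) (σ₁ • x)
      rw [sr_smul_sr_smul] at hback
      rw [halfFlow_sr_one_smul, hback, halfSign_sr_one_smul hE₁, neg_neg]
  · rw [halfFlow_sr_zero_smul hfree, halfFlow_sr_one_smul]
    ring

variable [MeasurableSpace X] [MeasurableConstSMul (DihedralGroup 0) X]

lemma measurable_demand (hE₀ : MeasurableSet E₀) (hE₁ : MeasurableSet E₁) :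
    Measurable (demand E₀ E₁) :=
  Measurable.ite hE₀ ((measurable_halfSign hE₁).add
    ((measurable_halfSign hE₁).comp (measurable_const_smul _))).floor measurable_const

lemma measurable_halfFlow [MeasurableEq X] (hE₀ : MeasurableSet E₀) (hE₁ : MeasurableSet E₁) :
    Measurable fun p : X × X => halfFlow E₀ E₁ p.1 p.2 := by
  have hsr (g : DihedralGroup 0) : MeasurableSet {p : X × X | p.2 = g • p.1} :=
    measurableSet_eq_fun measurable_snd ((measurable_const_smul g).comp measurable_fst)
  have hdemand : Measurable fun p : X × X => (demand E₀ E₁ p.1 : ℝ) :=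
    measurable_from_top.comp ((measurable_demand hE₀ hE₁).comp measurable_fst)
  have hsign : Measurable fun p : X × X => halfSign E₁ p.1 :=
    (measurable_halfSign hE₁).comp measurable_fst
  exact Measurable.ite (hsr _) hsign (Measurable.ite (hsr _) (hdemand.sub hsign) measurable_const)

theorem not_exists_integral_flow_demand
    (hfree : ∀ (g : DihedralGroup 0) (x : X), g • x = x → g = 1)
    (hE₀ : ∀ x, σ₀ • x ∈ E₀ ↔ x ∉ E₀) (hE₁ : ∀ x, σ₁ • x ∈ E₁ ↔ x ∉ E₁)
    (hE₁m : MeasurableSet E₁)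
    (hrigid : ∀ d : X → ℝ, Measurable d → (∀ x, d (σ₀ • x) = -d x) →
      (∀ x, d (σ₁ • x) = -d x) → ∃ x, d x = 0) :
    ¬∃ ψ : X → X → ℝ,
      Measurable (fun p : {p : X × X // (dihedralGraph X).Adj p.1 p.2} => ψ p.val.1 p.val.2) ∧
      IsFlowS (dihedralGraph X) (fun x => (demand E₀ E₁ x : ℝ)) ψ ∧
      ∀ x y, (dihedralGraph X).Adj x y → ∃ m : ℤ, ψ x y = (m : ℝ) := by
  rintro ⟨ψ, hψm, hψ, hint⟩
  have hadj (x : X) : (dihedralGraph X).Adj x (σ₁ • x) := (adj_iff_of_free hfree).mpr (.inr rfl)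
  have hcirc := isFlowS_zero_apply_sr_smul hfree (hψ.sub (isFlowS_halfFlow hfree hE₀ hE₁))
  simp only [Pi.sub_apply, halfFlow_sr_one_smul] at hcirc
  have hedge : Measurable fun x =>
      (⟨(x, σ₁ • x), hadj x⟩ : {p : X × X // (dihedralGraph X).Adj p.1 p.2}) :=
    (measurable_id.prodMk (measurable_const_smul _)).subtype_mk
  have hmeas : Measurable fun x => ψ x (σ₁ • x) - halfSign E₁ x :=
    (hψm.comp hedge).sub (measurable_halfSign hE₁m)
  obtain ⟨x, hx⟩ := hrigid _ hmeas (fun x => (hcirc x).1) (fun x => (hcirc x).2)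
  obtain ⟨m, hm⟩ := hint x _ (hadj x)
  exact halfSign_ne_intCast E₁ x m (by linarith)

end dihedralGraph
namespace AddCircle

open MeasureTheory

variable {p : ℝ} [Fact (0 < p)]

instance : NullSingletonClass (volume : Measure (AddCircle p)) :=
  ⟨fun z => by rw [← Metric.closedBall_zero, volume_closedBall]; simp⟩

theorem neg_preimage_not_ae_eq_compl {a : AddCircle p} (ha : addOrderOf a = 0)
    {Q : Set (AddCircle p)} (hQ : NullMeasurableSet Q) (hrot : (a + ·) ⁻¹' Q =ᵐ[volume] Q) :
    ¬Neg.neg ⁻¹' Q =ᵐ[volume] Qᶜ := by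
  intro hneg
  have hQQc : volume Q = volume Qᶜ :=
    (Measure.measure_preimage_neg _ _).symm.trans (measure_congr hneg)
  have hnull : volume Q = 0 := by
    rcases (ergodic_add_left.mpr ha).quasiErgodic.ae_empty_or_univ₀ hQ hrot with h | h
    · exact ae_eq_empty.mp h
    · exact hQQc.trans (ae_eq_univ.mp h)
  have huniv := measure_union_null hnull (hQQc ▸ hnull)
  rw [Set.union_compl_self, Measure.measure_univ_eq_zero] at huniv
  exact NeZero.ne _ huniv

end AddCircle

namespace UnitAddCircle

/-- The image of `[0, 1/2)`. -/
def lowerHalf : Set UnitAddCircle := {z | (AddCircle.equivIco 1 0 z : ℝ) < 1 / 2}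

lemma measurableSet_lowerHalf : MeasurableSet lowerHalf :=
  measurableSet_lt (measurable_subtype_coe.comp (AddCircle.measurableEquivIco 1 0).measurable)
    measurable_const

lemma coe_equivIco_coe (t : ℝ) :
    (AddCircle.equivIco 1 0 (t : UnitAddCircle) : ℝ) = Int.fract t := by
  simp [AddCircle.coe_equivIco_mk_apply]

lemma neg_coe_eq_coe_of_two_mul_eq_intCast {t : ℝ} {k : ℤ} (hk : 2 * t = k) :
    -(t : UnitAddCircle) = t := by
  rw [neg_eq_iff_add_eq_zero, ← AddCircle.coe_add, AddCircle.coe_eq_zero_iff]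
  exact ⟨k, by simp; linarith⟩

theorem neg_mem_lowerHalf_iff {z : UnitAddCircle} (hz : -z ≠ z) :
    -z ∈ lowerHalf ↔ z ∉ lowerHalf := by
  obtain ⟨t, rfl⟩ := QuotientAddGroup.mk_surjective z
  change -(t : UnitAddCircle) ≠ t at hz
  have hfloor := Int.floor_add_fract t
  have h0 : Int.fract t ≠ 0 := fun h =>
    hz (neg_coe_eq_coe_of_two_mul_eq_intCast (k := 2 * ⌊t⌋) (by push_cast; linarith))
  have hhalf : Int.fract t ≠ 1 / 2 := fun h =>
    hz (neg_coe_eq_coe_of_two_mul_eq_intCast (k := 2 * ⌊t⌋ + 1) (by push_cast; linarith))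
  change ((-t : ℝ) : UnitAddCircle) ∈ lowerHalf ↔ ¬ (t : UnitAddCircle) ∈ lowerHalf
  simp only [lowerHalf, Set.mem_ofPred_eq, coe_equivIco_coe, Int.fract_neg h0, not_lt]
  constructor <;> intro h
  · linarith
  · linarith [lt_of_le_of_ne h hhalf.symm]

end UnitAddCircle

namespace Laczkovich

open UnitAddCircle MeasureTheory

noncomputable def angle : UnitAddCircle := ((√2 : ℝ) : UnitAddCircle)

noncomputable def halfAngle : UnitAddCircle := ((√2 / 2 : ℝ) : UnitAddCircle)

lemma halfAngle_add_halfAngle : halfAngle + halfAngle = angle := by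
  rw [halfAngle, angle, ← AddCircle.coe_add, add_halves]

lemma addOrderOf_angle : addOrderOf angle = 0 :=
  addOrderOf_eq_zero_iff.mpr <| AddCircle.not_isOfFinAddOrder_iff_forall_rat_ne_div.mpr
    fun q hq => irrational_sqrt_two ⟨q, by simpa using hq⟩

lemma zsmul_angle_eq_zero_iff {k : ℤ} : k • angle = 0 ↔ k = 0 := by
  refine ⟨fun h => ?_, fun h => by rw [h, zero_zsmul]⟩
  by_contra hk
  exact addOrderOf_eq_zero_iff.mp addOrderOf_angle
    (isOfFinAddOrder_iff_zsmul_eq_zero.mpr ⟨k, hk, h⟩)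

/-- The sign in the reflections makes this compatible with `sr i * sr j = r (j - i)`. -/
noncomputable instance : SMul (DihedralGroup 0) UnitAddCircle where
  smul
    | r i, z => ZMod.castHom dvd_rfl ℤ i • angle + z
    | sr i, z => -(ZMod.castHom dvd_rfl ℤ i • angle + z)

lemma r_smul (i : ZMod 0) (z : UnitAddCircle) : r i • z = ZMod.castHom dvd_rfl ℤ i • angle + z :=
  rfl

lemma sr_smul (i : ZMod 0) (z : UnitAddCircle) :
    sr i • z = -(ZMod.castHom dvd_rfl ℤ i • angle + z) :=
  rfl

noncomputable instance : MulAction (DihedralGroup 0) UnitAddCircle where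
  one_smul z := by rw [one_def, r_smul, map_zero, zero_zsmul, zero_add]
  mul_smul := by
    rintro (i | i) (j | j) z <;>
      simp only [r_mul_r, r_mul_sr, sr_mul_r, sr_mul_sr, r_smul, sr_smul, map_add, map_sub,
        add_zsmul, sub_zsmul] <;>
      abel

lemma sr_zero_smul (z : UnitAddCircle) : σ₀ • z = -z := by simp [sr_smul]

lemma sr_one_smul (z : UnitAddCircle) : σ₁ • z = -(angle + z) := by simp [sr_smul]

instance : MeasurableConstSMul (DihedralGroup 0) UnitAddCircle where
  measurable_const_smul := by
    rintro (i | i)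
    · exact (continuous_const_add (ZMod.castHom dvd_rfl ℤ i • angle)).measurable
    · exact (continuous_const_add (ZMod.castHom dvd_rfl ℤ i • angle)).neg.measurable

abbrev FreeCircle : Type := freePoints (DihedralGroup 0) UnitAddCircle

instance : MeasurableConstSMul (DihedralGroup 0) FreeCircle where
  measurable_const_smul g := ((measurable_const_smul g).comp measurable_subtype_coe).subtype_mk

lemma countable_compl_freePoints :
    (freePoints (DihedralGroup 0) UnitAddCircle : Set UnitAddCircle)ᶜ.Countable := by
  refine (Set.countable_range fun p : ℤ × ℤ => (((p.2 - p.1 * √2) / 2 : ℝ) : UnitAddCircle)).mono ?_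
  intro z hz
  obtain ⟨g, hgz, hg⟩ : ∃ g : DihedralGroup 0, g • z = z ∧ g ≠ 1 := by
    simpa [mem_freePoints] using hz
  obtain ⟨t, rfl⟩ := QuotientAddGroup.mk_surjective z
  rcases g with i | i
  · rw [r_smul, add_eq_right, zsmul_angle_eq_zero_iff] at hgz
    exact absurd (congrArg r hgz) hg
  · rw [sr_smul, neg_eq_iff_add_eq_zero, angle, ← AddCircle.coe_zsmul, ← AddCircle.coe_add,
      ← AddCircle.coe_add, AddCircle.coe_eq_zero_iff] at hgz
    obtain ⟨m, hm⟩ := hgz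
    refine ⟨(ZMod.castHom dvd_rfl ℤ i, m), congrArg _ ?_⟩
    simp only [zsmul_eq_mul, mul_one] at hm ⊢
    linarith

lemma measurableSet_freePoints :
    MeasurableSet (freePoints (DihedralGroup 0) UnitAddCircle : Set UnitAddCircle) :=
  countable_compl_freePoints.measurableSet.of_compl

/-- `sr i` is the reflection about `-(i • halfAngle)`. -/
def transversal (i : ZMod 0) : Set FreeCircle :=
  {x | (x : UnitAddCircle) + ZMod.castHom dvd_rfl ℤ i • halfAngle ∈ lowerHalf}

lemma measurableSet_transversal (i : ZMod 0) : MeasurableSet (transversal i) :=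
  measurableSet_lowerHalf.preimage (measurable_subtype_coe.add_const _)

lemma sr_smul_mem_transversal_iff (i : ZMod 0) (x : FreeCircle) :
    sr i • x ∈ transversal i ↔ x ∉ transversal i := by
  set c := ZMod.castHom dvd_rfl ℤ i • halfAngle
  have hreflect : ((sr i • x : FreeCircle) : UnitAddCircle) + c = -((x : UnitAddCircle) + c) := by
    rw [SubMulAction.val_smul, sr_smul, ← halfAngle_add_halfAngle, zsmul_add]
    abel
  change _ + c ∈ lowerHalf ↔ ¬(_ + c ∈ lowerHalf)
  rw [hreflect]
  refine neg_mem_lowerHalf_iff fun h =>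
    dihedralGraph.sr_smul_ne freePoints.eq_one_of_smul_eq i x (Subtype.ext ?_)
  rw [← hreflect] at h
  exact add_right_cancel h

theorem exists_eq_zero_of_sr_smul {d : FreeCircle → ℝ} (hd : Measurable d)
    (h₀ : ∀ x, d (σ₀ • x) = -d x) (h₁ : ∀ x, d (σ₁ • x) = -d x) : ∃ x, d x = 0 := by
  by_contra! hne
  set Q : Set UnitAddCircle := Subtype.val '' {x : FreeCircle | 0 < d x}
  have hQ : MeasurableSet Q :=
    measurableSet_freePoints.subtype_image (measurableSet_lt measurable_const hd)
  have mem_Q (x : FreeCircle) : (x : UnitAddCircle) ∈ Q ↔ 0 < d x :=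
    Subtype.val_injective.mem_set_image
  have hae : ∀ᵐ z ∂volume, z ∈ freePoints (DihedralGroup 0) UnitAddCircle := by
    simpa using countable_compl_freePoints.ae_notMem volume
  refine AddCircle.neg_preimage_not_ae_eq_compl addOrderOf_angle hQ.nullMeasurableSet
    (Filter.eventuallyEq_set.mpr ?_) (Filter.eventuallyEq_set.mpr ?_) <;>
    filter_upwards [hae] with z hz <;> lift z to FreeCircle using hz with x
  · have hrot : angle + (x : UnitAddCircle) = (((σ₀ * σ₁) • x : FreeCircle) : UnitAddCircle) := by
      simp only [SubMulAction.val_smul, mul_smul, sr_zero_smul, sr_one_smul, neg_neg]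
    rw [Set.mem_preimage, hrot, mem_Q, mem_Q, mul_smul, h₀, h₁, neg_neg]
  · have hneg : -(x : UnitAddCircle) = ((σ₀ • x : FreeCircle) : UnitAddCircle) := by
      rw [SubMulAction.val_smul, sr_zero_smul]
    change _ ∈ Q ↔ ¬(_ ∈ Q)
    rw [hneg, mem_Q, mem_Q, h₀, neg_pos, not_lt]
    exact ⟨le_of_lt, fun h => lt_of_le_of_ne h (hne x)⟩

end Laczkovich

open Laczkovich dihedralGraph in
/-- **(Laczkovich).** There are a 2-regular acyclic Borel graph `G` on a standard Borel
space `X` and a Borel function `f : X → ℤ` such that `G` has a Borel `f`-flow but no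
integral Borel `f`-flow. -/
theorem exists_no_integral_borel_flow :
    ∃ (X : Type) (m : MeasurableSpace X), HasLaczkovichExample X := by
  have hfree : ∀ (g : DihedralGroup 0) (x : FreeCircle), g • x = x → g = 1 :=
    freePoints.eq_one_of_smul_eq
  have hE₀ := sr_smul_mem_transversal_iff 0
  have hE₁ := sr_smul_mem_transversal_iff 1
  have hE₀m := measurableSet_transversal 0
  have hE₁m := measurableSet_transversal 1
  exact ⟨FreeCircle, inferInstance, measurableSet_freePoints.standardBorel,
    dihedralGraph FreeCircle, demand (transversal 0) (transversal 1), measurableSet_adj,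
    ncard_neighborSet hfree, isAcyclic hfree, measurable_demand hE₀m hE₁m,
    ⟨halfFlow _ _, (measurable_halfFlow hE₀m hE₁m).comp measurable_subtype_coe,
      isFlowS_halfFlow hfree hE₀ hE₁⟩,
    not_exists_integral_flow_demand hfree hE₀ hE₁ hE₁m fun _ => exists_eq_zero_of_sr_smul⟩
end
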